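/- arXiv:1203.0793 — 12 statements merged into one kernel-verified Lean document; each statement's English description precedes it below -/
import Mathlib

section
/- Identify each 2-homogeneous polynomial P(x,y) = ax² + by² + cxy with real coefficients with the triple (a,b,c) ∈ ℝ³, and equip this space with the norm ‖P‖_□ = sup{|P(x,y)| : (x,y) ∈ [0,1]²}. Then P is an extreme point of the closed unit ball {P : ‖P‖_□ ≤ 1} if and only if P is one of the polynomials ±(t x² − y² + 2√(1−t) xy) or ±(−x² + t y² + 2√(1−t) xy) for some t ∈ [0,1], or one of ±(x² + y² − xy), ±(x² + y² − 3xy), ±x², ±y². -/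
open Real Set

/-- The unit ball of 2-homogeneous polynomials on the unit square. -/
def Sball : Set (ℝ × ℝ × ℝ) :=
  {q : ℝ × ℝ × ℝ | ∀ x y : ℝ, x ∈ Set.Icc (0 : ℝ) 1 → y ∈ Set.Icc (0 : ℝ) 1 →
    |q.1 * x ^ 2 + q.2.1 * y ^ 2 + q.2.2 * x * y| ≤ 1}

/-- one-sided quadratic bound from QE data -/
lemma quadUB {A B C : ℝ} (h0 : A ≤ 1) (h1 : A + B + C ≤ 1)
    (hV : B < 0 → 0 < C → C < -2*B → C^2 ≤ 4*B*(A-1)) :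
    ∀ s : ℝ, 0 ≤ s → s ≤ 1 → A + C*s + B*s^2 ≤ 1 := by
  intro s hs hs1
  rcases le_or_gt 0 B with hB | hB
  · nlinarith [mul_nonneg hB (mul_nonneg hs (by linarith : (0:ℝ) ≤ 1 - s))]
  rcases le_or_gt C 0 with hC | hC
  · nlinarith [mul_nonneg (neg_nonneg.2 hC) hs, mul_nonneg (neg_nonneg.2 (le_of_lt hB)) (sq_nonneg s)]
  rcases le_or_gt (-2*B) C with hC2 | hC2
  · have h : 0 ≤ C + B*(s+1) := by nlinarith
    nlinarith [mul_nonneg (by linarith : (0:ℝ) ≤ 1 - s) h]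
  · have h := hV hB hC hC2
    nlinarith [sq_nonneg (C + 2*B*s)]

lemma vertexUB {a b c : ℝ} (h : ∀ s : ℝ, 0 ≤ s → s ≤ 1 → |a + c*s + b*s^2| ≤ 1)
    (hb : b < 0) (hc : 0 < c) (hc2 : c < -2*b) : c^2 ≤ 4*b*(a-1) := by
  have hb2 : (0:ℝ) < -(2*b) := by linarith
  set s := c / (-(2*b)) with hsdef
  have hs0 : 0 ≤ s := div_nonneg hc.le hb2.le
  have hs1 : s ≤ 1 := (div_le_one hb2).2 (by linarith)
  have h2 := (abs_le.1 (h s hs0 hs1)).2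
  have hsb : s * (-(2*b)) = c := div_mul_cancel₀ _ hb2.ne'
  nlinarith [h2, hsb, mul_nonneg (sq_nonneg s) (sq_nonneg b)]

lemma vertexLB {a b c : ℝ} (h : ∀ s : ℝ, 0 ≤ s → s ≤ 1 → |a + c*s + b*s^2| ≤ 1)
    (hb : 0 < b) (hc : c < 0) (hc2 : -c < 2*b) : c^2 ≤ 4*b*(a+1) := by
  have h' : ∀ s : ℝ, 0 ≤ s → s ≤ 1 → |(-a) + (-c)*s + (-b)*s^2| ≤ 1 := by
    intro s hs hs1
    have := h s hs hs1
    rw [← abs_neg] at this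
    convert this using 2; ring
  have := vertexUB h' (by linarith) (by linarith) (by linarith)
  nlinarith [this]

lemma edgeF {a b c : ℝ} (h : (a, b, c) ∈ Sball) :
    ∀ s : ℝ, 0 ≤ s → s ≤ 1 → |a + c*s + b*s^2| ≤ 1 := by
  intro s hs hs1
  have := h 1 s (by norm_num) (by constructor <;> assumption)
  convert this using 2; ring

lemma edgeG {a b c : ℝ} (h : (a, b, c) ∈ Sball) :
    ∀ s : ℝ, 0 ≤ s → s ≤ 1 → |b + c*s + a*s^2| ≤ 1 := by
  intro s hs hs1
  have := h s 1 (by constructor <;> assumption) (by norm_num)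
  convert this using 2; ring

lemma memSball_iff (a b c : ℝ) :
    (a, b, c) ∈ Sball ↔
      |a| ≤ 1 ∧ |b| ≤ 1 ∧ |a + b + c| ≤ 1 ∧
      (b < 0 → 0 < c → c < -2*b → c^2 ≤ 4*b*(a-1)) ∧
      (0 < b → c < 0 → -c < 2*b → c^2 ≤ 4*b*(a+1)) ∧
      (a < 0 → 0 < c → c < -2*a → c^2 ≤ 4*a*(b-1)) ∧
      (0 < a → c < 0 → -c < 2*a → c^2 ≤ 4*a*(b+1)) := by
  constructor
  · intro h
    have hf := edgeF h
    have hg := edgeG h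
    have h10 := hf 0 le_rfl zero_le_one
    have h01 := hg 0 le_rfl zero_le_one
    have h11 := hf 1 zero_le_one le_rfl
    norm_num at h10 h01 h11
    refine ⟨h10, h01, by convert h11 using 2; ring, ?_, ?_, ?_, ?_⟩
    · intro hb hc hc2; exact vertexUB hf hb hc hc2
    · intro hb hc hc2; exact vertexLB hf hb hc hc2
    · intro ha hc hc2; exact vertexUB hg ha hc hc2
    · intro ha hc hc2; exact vertexLB hg ha hc hc2
  · rintro ⟨h1, h2, h3, H1, H2, H3, H4⟩
    have habs := abs_le.1 h1
    have hbabs := abs_le.1 h2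
    have hEabs := abs_le.1 h3
    have fub : ∀ s : ℝ, 0 ≤ s → s ≤ 1 → a + c*s + b*s^2 ≤ 1 :=
      quadUB habs.2 (by linarith) H1
    have flb : ∀ s : ℝ, 0 ≤ s → s ≤ 1 → -1 ≤ a + c*s + b*s^2 := by
      intro s hs hs1
      have := quadUB (A := -a) (B := -b) (C := -c) (by linarith) (by linarith)
        (by intro hb hc hc2; nlinarith [H2 (by linarith) (by linarith) (by linarith)]) s hs hs1
      linarith
    have gub : ∀ s : ℝ, 0 ≤ s → s ≤ 1 → b + c*s + a*s^2 ≤ 1 :=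
      quadUB hbabs.2 (by linarith) (by intro ha hc hc2; nlinarith [H3 (by linarith) hc (by linarith)])
    have glb : ∀ s : ℝ, 0 ≤ s → s ≤ 1 → -1 ≤ b + c*s + a*s^2 := by
      intro s hs hs1
      have := quadUB (A := -b) (B := -a) (C := -c) (by linarith) (by linarith)
        (by intro ha hc hc2; nlinarith [H4 (by linarith) (by linarith) (by linarith)]) s hs hs1
      linarith
    intro x y hx hy
    obtain ⟨hx0, hx1⟩ := hx
    obtain ⟨hy0, hy1⟩ := hy
    rcases le_total y x with hxy | hxy
    · rcases eq_or_lt_of_le hx0 with hx0' | hx0'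
      · have hy0' : y = 0 := le_antisymm (by linarith) hy0
        simp [← hx0', hy0']
      · set s := y / x with hsdef
        have hs0 : 0 ≤ s := div_nonneg hy0 (le_of_lt hx0')
        have hs1 : s ≤ 1 := by rw [div_le_one hx0']; exact hxy
        have key : a * x ^ 2 + b * y ^ 2 + c * x * y = (a + c*s + b*s^2) * x^2 := by
          have hsx : s * x = y := by rw [hsdef]; exact div_mul_cancel₀ y hx0'.ne'
          linear_combination (-(b*(y+s*x)) - c*x) * hsx
        show |a * x ^ 2 + b * y ^ 2 + c * x * y| ≤ 1
        rw [key, abs_mul, abs_sq]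
        have h1' := fub s hs0 hs1
        have h2' := flb s hs0 hs1
        have habs2 : |a + c*s + b*s^2| ≤ 1 := abs_le.2 ⟨h2', h1'⟩
        nlinarith [abs_nonneg (a + c*s + b*s^2), sq_nonneg x]
    · rcases eq_or_lt_of_le hy0 with hy0' | hy0'
      · have hx0' : x = 0 := le_antisymm (by linarith) hx0
        simp [← hy0', hx0']
      · set s := x / y with hsdef
        have hs0 : 0 ≤ s := div_nonneg hx0 (le_of_lt hy0')
        have hs1 : s ≤ 1 := by rw [div_le_one hy0']; exact hxy
        have key : a * x ^ 2 + b * y ^ 2 + c * x * y = (b + c*s + a*s^2) * y^2 := by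
          have hsy : s * y = x := by rw [hsdef]; exact div_mul_cancel₀ x hy0'.ne'
          linear_combination (-(a*(x+s*y)) - c*y) * hsy
        show |a * x ^ 2 + b * y ^ 2 + c * x * y| ≤ 1
        rw [key, abs_mul, abs_sq]
        have h1' := gub s hs0 hs1
        have h2' := glb s hs0 hs1
        have habs2 : |b + c*s + a*s^2| ≤ 1 := abs_le.2 ⟨h2', h1'⟩
        nlinarith [abs_nonneg (b + c*s + a*s^2), sq_nonneg y]

/-- being extreme in terms of symmetric perturbations -/
def crit (p : ℝ × ℝ × ℝ) : Prop :=
  p ∈ Sball ∧ ∀ v : ℝ × ℝ × ℝ, p + v ∈ Sball → p - v ∈ Sball → v = 0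

lemma crit_iff (p : ℝ × ℝ × ℝ) : p ∈ Set.extremePoints ℝ Sball ↔ crit p := by
  rw [mem_extremePoints]
  constructor
  · rintro ⟨hp, h⟩
    refine ⟨hp, fun v h1 h2 => ?_⟩
    have hseg : p ∈ openSegment ℝ (p + v) (p - v) := by
      refine ⟨1/2, 1/2, by norm_num, by norm_num, by norm_num, ?_⟩
      module
    have := (h _ h1 _ h2 hseg).1
    have : v = 0 := by
      have h' := congrArg (· - p) this
      simpa using h'
    exact this
  · rintro ⟨hp, h⟩
    refine ⟨hp, fun x₁ h₁ x₂ h₂ hseg => ?_⟩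
    obtain ⟨t, s, ht, hs, hts, heq⟩ := hseg
    set d := min t s with hd
    have hd0 : 0 < d := lt_min ht hs
    -- p ± d(x₁ - x₂) ∈ Sball
    have key : ∀ e : ℝ, 0 ≤ t + e → t + e ≤ 1 → p + e • (x₁ - x₂) ∈ Sball := by
      intro e he0 he1
      have hco : p + e • (x₁ - x₂) = (t + e) • x₁ + (s - e) • x₂ := by
        rw [← heq]; module
      rw [hco]
      intro x y hx hy
      have e1 := h₁ x y hx hy
      have e2 := h₂ x y hx hy
      have hval : ((t + e) • x₁ + (s - e) • x₂).1 * x ^ 2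
          + ((t + e) • x₁ + (s - e) • x₂).2.1 * y ^ 2
          + ((t + e) • x₁ + (s - e) • x₂).2.2 * x * y
          = (t + e) * (x₁.1 * x ^ 2 + x₁.2.1 * y ^ 2 + x₁.2.2 * x * y)
            + (s - e) * (x₂.1 * x ^ 2 + x₂.2.1 * y ^ 2 + x₂.2.2 * x * y) := by
        simp [Prod.smul_def, smul_eq_mul]; ring
      rw [hval]
      have := (abs_add_le ((t + e) * (x₁.1 * x ^ 2 + x₁.2.1 * y ^ 2 + x₁.2.2 * x * y))
        ((s - e) * (x₂.1 * x ^ 2 + x₂.2.1 * y ^ 2 + x₂.2.2 * x * y)))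
      rw [abs_mul, abs_mul, abs_of_nonneg he0, abs_of_nonneg (by linarith : (0:ℝ) ≤ s - e)] at this
      have b1 : (t+e) * |x₁.1 * x ^ 2 + x₁.2.1 * y ^ 2 + x₁.2.2 * x * y| ≤ (t+e) * 1 :=
        mul_le_mul_of_nonneg_left e1 he0
      have b2 : (s-e) * |x₂.1 * x ^ 2 + x₂.2.1 * y ^ 2 + x₂.2.2 * x * y| ≤ (s-e) * 1 :=
        mul_le_mul_of_nonneg_left e2 (by linarith)
      linarith
    have hplus := key d (by linarith) (by have := min_le_right t s; linarith)
    have hminus := key (-d) (by have := min_le_left t s; linarith) (by linarith)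
    have hv := h (d • (x₁ - x₂)) hplus (by rw [sub_eq_add_neg, ← neg_smul]; exact hminus)
    have hx12 : x₁ = x₂ := by
      have : x₁ - x₂ = 0 := by
        rcases smul_eq_zero.1 hv with h' | h'
        · exact absurd h' (ne_of_gt hd0)
        · exact h'
      exact sub_eq_zero.1 this
    subst hx12
    have hpx : p = x₁ := by
      rw [← heq, ← add_smul, hts, one_smul]
    exact ⟨hpx.symm, hpx.symm⟩

def swp (p : ℝ × ℝ × ℝ) : ℝ × ℝ × ℝ := (p.2.1, p.1, p.2.2)

lemma Sball_neg {p : ℝ × ℝ × ℝ} (h : p ∈ Sball) : -p ∈ Sball := by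
  intro x y hx hy
  have := h x y hx hy
  rw [← abs_neg] at this
  convert this using 2
  show -p.1 * x ^ 2 + -p.2.1 * y ^ 2 + -p.2.2 * x * y = _
  ring

lemma Sball_swap {p : ℝ × ℝ × ℝ} (h : p ∈ Sball) : swp p ∈ Sball := by
  intro x y hx hy
  have := h y x hy hx
  convert this using 2
  show p.2.1 * x ^ 2 + p.1 * y ^ 2 + p.2.2 * x * y = _
  ring

lemma crit_neg {p : ℝ × ℝ × ℝ} (h : crit p) : crit (-p) := by
  refine ⟨Sball_neg h.1, fun v h1 h2 => ?_⟩
  have hv := h.2 (-v) ?_ ?_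
  · simpa using congrArg Neg.neg hv
  · have := Sball_neg h1
    convert this using 1; module
  · have := Sball_neg h2
    convert this using 1; module

lemma swp_add (p q : ℝ × ℝ × ℝ) : swp (p + q) = swp p + swp q := rfl
lemma swp_invol (p : ℝ × ℝ × ℝ) : swp (swp p) = p := rfl

lemma crit_swap {p : ℝ × ℝ × ℝ} (h : crit p) : crit (swp p) := by
  refine ⟨Sball_swap h.1, fun v h1 h2 => ?_⟩
  have hv := h.2 (swp v) ?_ ?_
  · have := congrArg swp hv
    exact (swp_invol v).symm.trans this
  · have := Sball_swap h1
    convert this using 1; rfl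
  · have := Sball_swap h2
    convert this using 1; rfl

/-- the claimed set of extreme points -/
def listP (p : ℝ × ℝ × ℝ) : Prop :=
  (∃ t ∈ Set.Icc (0 : ℝ) 1,
    p = (t, -1, 2 * Real.sqrt (1 - t)) ∨
    p = (-t, 1, -(2 * Real.sqrt (1 - t))) ∨
    p = (-1, t, 2 * Real.sqrt (1 - t)) ∨
    p = (1, -t, -(2 * Real.sqrt (1 - t)))) ∨
  p = (1, 1, -1) ∨ p = (-1, -1, 1) ∨
  p = (1, 1, -3) ∨ p = (-1, -1, 3) ∨
  p = (1, 0, 0) ∨ p = (-1, 0, 0) ∨ p = (0, 1, 0) ∨ p = (0, -1, 0)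

lemma listP_neg {p : ℝ × ℝ × ℝ} (h : listP (-p)) : listP p := by
  have key : ∀ q : ℝ × ℝ × ℝ, -p = q → p = -q := by
    intro q h'; rw [← h', neg_neg]
  rcases h with ⟨t, ht, h⟩ | h | h | h | h | h | h | h | h
  · refine Or.inl ⟨t, ht, ?_⟩
    rcases h with h | h | h | h
    · exact Or.inr (Or.inl (by rw [key _ h]; simp [Prod.ext_iff]))
    · exact Or.inl (by rw [key _ h]; simp [Prod.ext_iff])
    · exact Or.inr (Or.inr (Or.inr (by rw [key _ h]; simp [Prod.ext_iff])))
    · exact Or.inr (Or.inr (Or.inl (by rw [key _ h]; simp [Prod.ext_iff])))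
  · exact Or.inr (Or.inr (Or.inl (by rw [key _ h]; norm_num [Prod.ext_iff])))
  · exact Or.inr (Or.inl (by rw [key _ h]; norm_num [Prod.ext_iff]))
  · exact Or.inr (Or.inr (Or.inr (Or.inr (Or.inl (by rw [key _ h]; norm_num [Prod.ext_iff])))))
  · exact Or.inr (Or.inr (Or.inr (Or.inl (by rw [key _ h]; norm_num [Prod.ext_iff]))))
  · exact Or.inr (Or.inr (Or.inr (Or.inr (Or.inr (Or.inr (Or.inl (by rw [key _ h]; norm_num [Prod.ext_iff])))))))
  · exact Or.inr (Or.inr (Or.inr (Or.inr (Or.inr (Or.inl (by rw [key _ h]; norm_num [Prod.ext_iff]))))))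
  · exact Or.inr (Or.inr (Or.inr (Or.inr (Or.inr (Or.inr (Or.inr (Or.inr (by rw [key _ h]; norm_num [Prod.ext_iff]))))))))
  · exact Or.inr (Or.inr (Or.inr (Or.inr (Or.inr (Or.inr (Or.inr (Or.inl (by rw [key _ h]; norm_num [Prod.ext_iff]))))))))

lemma listP_swap {p : ℝ × ℝ × ℝ} (h : listP (swp p)) : listP p := by
  have key : ∀ q : ℝ × ℝ × ℝ, swp p = q → p = swp q := by
    intro q h'; rw [← swp_invol p, h']
  rcases h with ⟨t, ht, h⟩ | h | h | h | h | h | h | h | h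
  · refine Or.inl ⟨t, ht, ?_⟩
    rcases h with h | h | h | h
    · exact Or.inr (Or.inr (Or.inl (key _ h)))
    · exact Or.inr (Or.inr (Or.inr (key _ h)))
    · exact Or.inl (key _ h)
    · exact Or.inr (Or.inl (key _ h))
  · exact Or.inr (Or.inl (key _ h))
  · exact Or.inr (Or.inr (Or.inl (key _ h)))
  · exact Or.inr (Or.inr (Or.inr (Or.inl (key _ h))))
  · exact Or.inr (Or.inr (Or.inr (Or.inr (Or.inl (key _ h)))))
  · exact Or.inr (Or.inr (Or.inr (Or.inr (Or.inr (Or.inr (Or.inr (Or.inl (key _ h))))))))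
  · exact Or.inr (Or.inr (Or.inr (Or.inr (Or.inr (Or.inr (Or.inr (Or.inr (key _ h))))))))
  · exact Or.inr (Or.inr (Or.inr (Or.inr (Or.inr (Or.inl (key _ h))))))
  · exact Or.inr (Or.inr (Or.inr (Or.inr (Or.inr (Or.inr (Or.inl (key _ h)))))))

lemma vzero {α β γ : ℝ} (ha : α = 0) (hb : β = 0) (hc : γ = 0) :
    ((α, β, γ) : ℝ × ℝ × ℝ) = 0 := by
  simp [Prod.ext_iff, ha, hb, hc]

lemma crit_family1 {t : ℝ} (ht : t ∈ Set.Icc (0:ℝ) 1) :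
    crit (t, -1, 2 * Real.sqrt (1 - t)) := by
  obtain ⟨ht0, ht1⟩ := ht
  set u := Real.sqrt (1 - t) with hu
  have hu0 : 0 ≤ u := Real.sqrt_nonneg _
  have hu2 : u^2 = 1 - t := Real.sq_sqrt (by linarith)
  have hu1 : u ≤ 1 := by nlinarith
  constructor
  · rw [memSball_iff]
    refine ⟨by rw [abs_le]; constructor <;> linarith,
      by norm_num, by rw [abs_le]; constructor <;> nlinarith, ?_, ?_, ?_, ?_⟩
    · intro _ hc hc2; nlinarith
    · intro h; norm_num at h
    · intro ha hc hc2; nlinarith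
    · intro _ hc; nlinarith
  · rintro ⟨α, β, γ⟩ h1 h2
    -- β = 0
    have e1 := h1 0 1 (by norm_num) (by norm_num)
    have e2 := h2 0 1 (by norm_num) (by norm_num)
    simp only [Prod.fst_add, Prod.snd_add, Prod.fst_sub, Prod.snd_sub] at e1 e2
    norm_num at e1 e2
    rw [abs_le] at e1 e2
    have hβ : β = 0 := by linarith [e1.1, e2.1]
    subst hβ
    -- α + γ u = 0
    have f1 := h1 1 u (by norm_num) (by exact ⟨hu0, hu1⟩)
    have f2 := h2 1 u (by norm_num) (by exact ⟨hu0, hu1⟩)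
    simp only [Prod.fst_add, Prod.snd_add, Prod.fst_sub, Prod.snd_sub] at f1 f2
    rw [abs_le] at f1 f2
    have key1 : (t + α) * 1 ^ 2 + (-1 + 0) * u ^ 2 + (2 * u + γ) * 1 * u
        = 1 + (α + γ * u) := by linear_combination hu2
    have key2 : (t - α) * 1 ^ 2 + (-1 - 0) * u ^ 2 + (2 * u - γ) * 1 * u
        = 1 - (α + γ * u) := by linear_combination hu2
    rw [key1] at f1; rw [key2] at f2
    have hαγ : α + γ * u = 0 := by linarith [f1.2, f2.2]
    -- the tangency pinch
    have key : ∀ y : ℝ, 0 ≤ y → y ≤ 1 → |γ * (y - u)| ≤ (y - u)^2 := by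
      intro y hy0 hy1
      have g1 := h1 1 y (by norm_num) ⟨hy0, hy1⟩
      have g2 := h2 1 y (by norm_num) ⟨hy0, hy1⟩
      simp only [Prod.fst_add, Prod.snd_add, Prod.fst_sub, Prod.snd_sub] at g1 g2
      rw [abs_le] at g1 g2
      have k1 : (t + α) * 1 ^ 2 + (-1 + 0) * y ^ 2 + (2 * u + γ) * 1 * y
          = 1 - (y - u)^2 + γ * (y - u) + (α + γ * u) := by linear_combination hu2
      have k2 : (t - α) * 1 ^ 2 + (-1 - 0) * y ^ 2 + (2 * u - γ) * 1 * y
          = 1 - (y - u)^2 - γ * (y - u) - (α + γ * u) := by linear_combination hu2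
      rw [k1, hαγ] at g1; rw [k2, hαγ] at g2
      rw [abs_le]
      constructor <;> nlinarith [g1.2, g2.2]
    have hγ : γ = 0 := by
      by_contra hγ
      have hγ' : 0 < |γ| := abs_pos.2 hγ
      set ε := min |γ| 1 / 2 with hε
      have hε0 : 0 < ε := by positivity
      have hε1 : ε ≤ |γ| / 2 := by
        rw [hε]; gcongr; exact min_le_left _ _
      have hε2 : ε ≤ 1 / 2 := by
        rw [hε]; gcongr; exact min_le_right _ _
      rcases le_or_gt u (1/2) with hcase | hcase
      · have := key (u + ε) (by linarith) (by linarith)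
        rw [show u + ε - u = ε by ring, abs_mul, abs_of_nonneg hε0.le] at this
        nlinarith [this, hγ', sq_nonneg ε]
      · have := key (u - ε) (by linarith) (by linarith)
        rw [show u - ε - u = -ε by ring, abs_mul, abs_neg, abs_of_nonneg hε0.le] at this
        nlinarith [this, hγ', sq_nonneg ε]
    have hα : α = 0 := by
      subst hγ; simpa using hαγ
    exact vzero hα rfl hγ

lemma abs_le_one_iff {z : ℝ} : |z| ≤ 1 ↔ -1 ≤ z ∧ z ≤ 1 := abs_le

lemma crit_m1m11 : crit (-1, -1, 1) := by
  constructor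
  · rw [memSball_iff]
    norm_num [abs_le]
  · rintro ⟨α, β, γ⟩ h1 h2
    have e1 := h1 1 0 (by norm_num) (by norm_num)
    have e2 := h2 1 0 (by norm_num) (by norm_num)
    have f1 := h1 0 1 (by norm_num) (by norm_num)
    have f2 := h2 0 1 (by norm_num) (by norm_num)
    have g1 := h1 1 1 (by norm_num) (by norm_num)
    have g2 := h2 1 1 (by norm_num) (by norm_num)
    simp only [Prod.fst_add, Prod.snd_add, Prod.fst_sub, Prod.snd_sub] at e1 e2 f1 f2 g1 g2
    norm_num at e1 e2 f1 f2 g1 g2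
    rw [abs_le] at e1 e2 f1 f2 g1 g2
    exact vzero (by linarith [e1.1, e2.1]) (by linarith [f1.1, f2.1])
      (by linarith [e1.1, e2.1, f1.1, f2.1, g1.1, g2.1])

lemma crit_m1m13 : crit (-1, -1, 3) := by
  constructor
  · rw [memSball_iff]
    norm_num [abs_le]
  · rintro ⟨α, β, γ⟩ h1 h2
    have e1 := h1 1 0 (by norm_num) (by norm_num)
    have e2 := h2 1 0 (by norm_num) (by norm_num)
    have f1 := h1 0 1 (by norm_num) (by norm_num)
    have f2 := h2 0 1 (by norm_num) (by norm_num)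
    have g1 := h1 1 1 (by norm_num) (by norm_num)
    have g2 := h2 1 1 (by norm_num) (by norm_num)
    simp only [Prod.fst_add, Prod.snd_add, Prod.fst_sub, Prod.snd_sub] at e1 e2 f1 f2 g1 g2
    norm_num at e1 e2 f1 f2 g1 g2
    rw [abs_le] at e1 e2 f1 f2 g1 g2
    exact vzero (by linarith [e1.1, e2.1]) (by linarith [f1.1, f2.1])
      (by linarith [e1.1, e2.1, f1.1, f2.1, g1.2, g2.2])

lemma crit_100 : crit (1, 0, 0) := by
  constructor
  · rw [memSball_iff]
    norm_num [abs_le]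
  · rintro ⟨α, β, γ⟩ h1 h2
    have e1 := h1 1 0 (by norm_num) (by norm_num)
    have e2 := h2 1 0 (by norm_num) (by norm_num)
    have g1 := h1 1 1 (by norm_num) (by norm_num)
    have g2 := h2 1 1 (by norm_num) (by norm_num)
    have k1 := h1 1 (1/2) (by norm_num) (by norm_num)
    have k2 := h2 1 (1/2) (by norm_num) (by norm_num)
    simp only [Prod.fst_add, Prod.snd_add, Prod.fst_sub, Prod.snd_sub] at e1 e2 g1 g2 k1 k2
    norm_num at e1 e2 g1 g2 k1 k2
    rw [abs_le] at e1 e2 g1 g2 k1 k2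
    exact vzero (by linarith [e1.2, e2.2])
      (by linarith [e1.2, e2.2, g1.2, g2.2, k1.2, k2.2])
      (by linarith [e1.2, e2.2, g1.2, g2.2, k1.2, k2.2])

lemma crit_0m10 : crit (0, -1, 0) := by
  constructor
  · rw [memSball_iff]
    norm_num [abs_le]
  · rintro ⟨α, β, γ⟩ h1 h2
    have e1 := h1 0 1 (by norm_num) (by norm_num)
    have e2 := h2 0 1 (by norm_num) (by norm_num)
    have g1 := h1 1 1 (by norm_num) (by norm_num)
    have g2 := h2 1 1 (by norm_num) (by norm_num)
    have k1 := h1 (1/2) 1 (by norm_num) (by norm_num)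
    have k2 := h2 (1/2) 1 (by norm_num) (by norm_num)
    simp only [Prod.fst_add, Prod.snd_add, Prod.fst_sub, Prod.snd_sub] at e1 e2 g1 g2 k1 k2
    norm_num at e1 e2 g1 g2 k1 k2
    rw [abs_le] at e1 e2 g1 g2 k1 k2
    exact vzero (by linarith [e1.1, e2.1, g1.1, g2.1, k1.1, k2.1])
      (by linarith [e1.1, e2.1])
      (by linarith [e1.1, e2.1, g1.1, g2.1, k1.1, k2.1])

lemma vgAuto {A B C : ℝ} (hA : -1 ≤ A) (hBA : B ≤ 1 + A) (h1 : A < 0) (h2 : 0 < C)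
    (h3 : C < -2*A) : C^2 ≤ 4*A*(B-1) := by
  nlinarith [mul_pos (by linarith : (0:ℝ) < -2*A - C) h2,
    mul_pos (by linarith : (0:ℝ) < -2*A) (by linarith : (0:ℝ) < -2*A - C),
    mul_nonneg (by linarith : (0:ℝ) ≤ 1 + A - B) (by linarith : (0:ℝ) ≤ -A)]

lemma vgAuto2 {A B C : ℝ} (hAB : A ≤ 1 + B) (h1 : 0 < A) (h2 : C < 0) (h3 : -C < 2*A) :
    C^2 ≤ 4*A*(B+1) := by
  nlinarith [mul_pos (by linarith : (0:ℝ) < 2*A + C) (by linarith : (0:ℝ) < -C),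
    mul_pos (by linarith : (0:ℝ) < 2*A) (by linarith : (0:ℝ) < 2*A + C),
    mul_nonneg (by linarith : (0:ℝ) ≤ 1 + B - A) h1.le]

lemma vne1 {x : ℝ} (h : x ≠ 0) (y z : ℝ) : ((x,y,z) : ℝ×ℝ×ℝ) ≠ 0 :=
  fun H => h (congrArg Prod.fst H)
lemma vne2 (x : ℝ) {y : ℝ} (h : y ≠ 0) (z : ℝ) : ((x,y,z) : ℝ×ℝ×ℝ) ≠ 0 :=
  fun H => h (congrArg (fun q : ℝ×ℝ×ℝ => q.2.1) H)
lemma vne3 (x y : ℝ) {z : ℝ} (h : z ≠ 0) : ((x,y,z) : ℝ×ℝ×ℝ) ≠ 0 :=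
  fun H => h (congrArg (fun q : ℝ×ℝ×ℝ => q.2.2) H)

-- test leaf L4
lemma leafL4 {a : ℝ} (h1 : -1 < a) (h2 : a < 0) :
    ∃ v : ℝ×ℝ×ℝ, v ≠ 0 ∧ ((a,-1,2):ℝ×ℝ×ℝ) + v ∈ Sball ∧ ((a,-1,2):ℝ×ℝ×ℝ) - v ∈ Sball := by
  set ε := min (-a) (1+a) / 2 with hε
  have hε0 : 0 < ε := by
    have := lt_min (show (0:ℝ) < -a by linarith) (show (0:ℝ) < 1+a by linarith)
    rw [hε]; linarith
  have hεa : 2*ε ≤ -a := by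
    have := min_le_left (-a) (1+a); rw [hε]; linarith
  have hεb : 2*ε ≤ 1+a := by
    have := min_le_right (-a) (1+a); rw [hε]; linarith
  refine ⟨(ε, 0, 0), vne1 hε0.ne' _ _, ?_, ?_⟩
  · rw [show ((a,-1,2):ℝ×ℝ×ℝ) + (ε,0,0) = ((a+ε,-1,2):ℝ×ℝ×ℝ) by norm_num [Prod.ext_iff, sub_eq_add_neg],
      memSball_iff]
    refine ⟨abs_le.2 ⟨by linarith, by linarith⟩, by norm_num,
      abs_le.2 ⟨by linarith, by linarith⟩, ?_, ?_, ?_, ?_⟩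
    · intro _ _ h; linarith
    · intro h; linarith
    · intro _ _ h; linarith
    · intro h; linarith
  · rw [show ((a,-1,2):ℝ×ℝ×ℝ) - (ε,0,0) = ((a-ε,-1,2):ℝ×ℝ×ℝ) by norm_num [Prod.ext_iff, sub_eq_add_neg],
      memSball_iff]
    refine ⟨abs_le.2 ⟨by linarith, by linarith⟩, by norm_num,
      abs_le.2 ⟨by linarith, by linarith⟩, ?_, ?_, ?_, ?_⟩
    · intro _ _ h; linarith
    · intro h; linarith
    · intro _ _ h; linarith
    · intro h; linarith

-- L1 : b ≥ 0, a < 1, a+b+c = 1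
lemma leafL1 {a b c : ℝ} (hb0 : 0 ≤ b) (hba : b ≤ a) (ha1 : a < 1) (hc : 0 ≤ c)
    (hE : a + b + c = 1) :
    ∃ v : ℝ×ℝ×ℝ, v ≠ 0 ∧ ((a,b,c):ℝ×ℝ×ℝ) + v ∈ Sball ∧ ((a,b,c):ℝ×ℝ×ℝ) - v ∈ Sball := by
  have ha0 : 0 ≤ a := le_trans hb0 hba
  set ε := (1-a)/2 with hεdef
  have hε0 : 0 < ε := by rw [hεdef]; linarith
  have hε1 : 2*ε = 1 - a := by rw [hεdef]; ring
  refine ⟨(ε, -ε, 0), vne1 hε0.ne' _ _, ?_, ?_⟩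
  · rw [show ((a,b,c):ℝ×ℝ×ℝ) + (ε,-ε,0) = ((a+ε,b-ε,c):ℝ×ℝ×ℝ) by norm_num [Prod.ext_iff, sub_eq_add_neg],
      memSball_iff]
    refine ⟨abs_le.2 ⟨by linarith, by linarith⟩, abs_le.2 ⟨by linarith, by linarith⟩,
      abs_le.2 ⟨by linarith, by linarith⟩, ?_, ?_, ?_, ?_⟩
    · intro h1 h2 h3
      exact vgAuto (by linarith) (by linarith) h1 h2 h3
    · intro _ h; linarith
    · intro h; linarith
    · intro _ h; linarith
  · rw [show ((a,b,c):ℝ×ℝ×ℝ) - (ε,-ε,0) = ((a-ε,b+ε,c):ℝ×ℝ×ℝ) by norm_num [Prod.ext_iff, sub_eq_add_neg],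
      memSball_iff]
    refine ⟨abs_le.2 ⟨by linarith, by linarith⟩, abs_le.2 ⟨by linarith, by linarith⟩,
      abs_le.2 ⟨by linarith, by linarith⟩, ?_, ?_, ?_, ?_⟩
    · intro h; linarith
    · intro _ h; linarith
    · intro h1 h2 h3
      exact vgAuto (by linarith) (by linarith) h1 h2 h3
    · intro _ h; linarith

-- L2 : b ≥ 0, a < 1, a+b+c < 1
lemma leafL2 {a b c : ℝ} (hb0 : 0 ≤ b) (hba : b ≤ a) (ha1 : a < 1) (hc : 0 ≤ c)
    (hE : a + b + c < 1) :
    ∃ v : ℝ×ℝ×ℝ, v ≠ 0 ∧ ((a,b,c):ℝ×ℝ×ℝ) + v ∈ Sball ∧ ((a,b,c):ℝ×ℝ×ℝ) - v ∈ Sball := by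
  have ha0 : 0 ≤ a := le_trans hb0 hba
  set ε := min (1-a) (1-a-b-c) / 2 with hεdef
  have hε0 : 0 < ε := by
    have := lt_min (show (0:ℝ) < 1-a by linarith) (show (0:ℝ) < 1-a-b-c by linarith)
    rw [hεdef]; linarith
  have hε1 : 2*ε ≤ 1 - a := by
    have := min_le_left (1-a) (1-a-b-c); rw [hεdef]; linarith
  have hε2 : 2*ε ≤ 1-a-b-c := by
    have := min_le_right (1-a) (1-a-b-c); rw [hεdef]; linarith
  refine ⟨(ε, 0, 0), vne1 hε0.ne' _ _, ?_, ?_⟩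
  · rw [show ((a,b,c):ℝ×ℝ×ℝ) + (ε,0,0) = ((a+ε,b,c):ℝ×ℝ×ℝ) by norm_num [Prod.ext_iff, sub_eq_add_neg],
      memSball_iff]
    refine ⟨abs_le.2 ⟨by linarith, by linarith⟩, abs_le.2 ⟨by linarith, by linarith⟩,
      abs_le.2 ⟨by linarith, by linarith⟩, ?_, ?_, ?_, ?_⟩
    · intro h; linarith
    · intro _ h; linarith
    · intro h; linarith
    · intro _ h; linarith
  · rw [show ((a,b,c):ℝ×ℝ×ℝ) - (ε,0,0) = ((a-ε,b,c):ℝ×ℝ×ℝ) by norm_num [Prod.ext_iff, sub_eq_add_neg],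
      memSball_iff]
    refine ⟨abs_le.2 ⟨by linarith, by linarith⟩, abs_le.2 ⟨by linarith, by linarith⟩,
      abs_le.2 ⟨by linarith, by linarith⟩, ?_, ?_, ?_, ?_⟩
    · intro h; linarith
    · intro _ h; linarith
    · intro h1 h2 h3
      exact vgAuto (by linarith) (by linarith) h1 h2 h3
    · intro _ h; linarith

-- L3 : the point (-1,-1,2)
lemma leafL3 :
    ∃ v : ℝ×ℝ×ℝ, v ≠ 0 ∧ ((-1,-1,2):ℝ×ℝ×ℝ) + v ∈ Sball ∧ ((-1,-1,2):ℝ×ℝ×ℝ) - v ∈ Sball := by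
  refine ⟨(0, 0, 1/2), vne3 _ _ (by norm_num), ?_, ?_⟩
  · rw [show ((-1,-1,2):ℝ×ℝ×ℝ) + (0,0,1/2) = ((-1,-1,5/2):ℝ×ℝ×ℝ) by norm_num [Prod.ext_iff, sub_eq_add_neg],
      memSball_iff]
    norm_num [abs_le]
  · rw [show ((-1,-1,2):ℝ×ℝ×ℝ) - (0,0,1/2) = ((-1,-1,3/2):ℝ×ℝ×ℝ) by norm_num [Prod.ext_iff, sub_eq_add_neg],
      memSball_iff]
    norm_num [abs_le]

-- L5 : a = b = -1, 2 < c < 3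
lemma leafL5 {c : ℝ} (h1 : 2 < c) (h2 : c < 3) :
    ∃ v : ℝ×ℝ×ℝ, v ≠ 0 ∧ ((-1,-1,c):ℝ×ℝ×ℝ) + v ∈ Sball ∧ ((-1,-1,c):ℝ×ℝ×ℝ) - v ∈ Sball := by
  set γ := min (3-c) (c-2) / 2 with hγdef
  have hγ0 : 0 < γ := by
    have := lt_min (show (0:ℝ) < 3-c by linarith) (show (0:ℝ) < c-2 by linarith)
    rw [hγdef]; linarith
  have hγ1 : 2*γ ≤ 3-c := by
    have := min_le_left (3-c) (c-2); rw [hγdef]; linarith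
  have hγ2 : 2*γ ≤ c-2 := by
    have := min_le_right (3-c) (c-2); rw [hγdef]; linarith
  refine ⟨(0, 0, γ), vne3 _ _ hγ0.ne', ?_, ?_⟩
  · rw [show ((-1,-1,c):ℝ×ℝ×ℝ) + (0,0,γ) = ((-1,-1,c+γ):ℝ×ℝ×ℝ) by norm_num [Prod.ext_iff, sub_eq_add_neg],
      memSball_iff]
    refine ⟨by norm_num, by norm_num, abs_le.2 ⟨by linarith, by linarith⟩, ?_, ?_, ?_, ?_⟩
    · intro _ _ h; linarith
    · intro h; linarith
    · intro _ _ h; linarith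
    · intro h; linarith
  · rw [show ((-1,-1,c):ℝ×ℝ×ℝ) - (0,0,γ) = ((-1,-1,c-γ):ℝ×ℝ×ℝ) by norm_num [Prod.ext_iff, sub_eq_add_neg],
      memSball_iff]
    refine ⟨by norm_num, by norm_num, abs_le.2 ⟨by linarith, by linarith⟩, ?_, ?_, ?_, ?_⟩
    · intro _ _ h; linarith
    · intro h; linarith
    · intro _ _ h; linarith
    · intro h; linarith

-- L6 : b = -1, c > 2, a > -1
lemma leafL6 {a c : ℝ} (h1 : -1 < a) (h2 : 2 < c) (hE : a + c ≤ 2) :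
    ∃ v : ℝ×ℝ×ℝ, v ≠ 0 ∧ ((a,-1,c):ℝ×ℝ×ℝ) + v ∈ Sball ∧ ((a,-1,c):ℝ×ℝ×ℝ) - v ∈ Sball := by
  have ha0 : a < 0 := by linarith
  set δ := min (1+a) (c-2) / 2 with hδdef
  have hδ0 : 0 < δ := by
    have := lt_min (show (0:ℝ) < 1+a by linarith) (show (0:ℝ) < c-2 by linarith)
    rw [hδdef]; linarith
  have hδ1 : 2*δ ≤ 1+a := by
    have := min_le_left (1+a) (c-2); rw [hδdef]; linarith
  have hδ2 : 2*δ ≤ c-2 := by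
    have := min_le_right (1+a) (c-2); rw [hδdef]; linarith
  refine ⟨(δ, 0, -δ), vne1 hδ0.ne' _ _, ?_, ?_⟩
  · rw [show ((a,-1,c):ℝ×ℝ×ℝ) + (δ,0,-δ) = ((a+δ,-1,c-δ):ℝ×ℝ×ℝ) by norm_num [Prod.ext_iff, sub_eq_add_neg],
      memSball_iff]
    refine ⟨abs_le.2 ⟨by linarith, by linarith⟩, by norm_num,
      abs_le.2 ⟨by linarith, by linarith⟩, ?_, ?_, ?_, ?_⟩
    · intro _ _ h; linarith
    · intro h _; linarith
    · intro h _ h3; linarith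
    · intro _ h; linarith
  · rw [show ((a,-1,c):ℝ×ℝ×ℝ) - (δ,0,-δ) = ((a-δ,-1,c+δ):ℝ×ℝ×ℝ) by norm_num [Prod.ext_iff, sub_eq_add_neg],
      memSball_iff]
    refine ⟨abs_le.2 ⟨by linarith, by linarith⟩, by norm_num,
      abs_le.2 ⟨by linarith, by linarith⟩, ?_, ?_, ?_, ?_⟩
    · intro _ _ h; linarith
    · intro h _; linarith
    · intro h _ h3; linarith
    · intro _ h; linarith

-- L7 : b = -1, a = -c, 0 < c < 1  (E = -1 endpoint-active case on lower family)
lemma leafL7 {a c : ℝ} (hac : a = -c) (h1 : 0 < c) (h2 : c < 1) :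
    ∃ v : ℝ×ℝ×ℝ, v ≠ 0 ∧ ((a,-1,c):ℝ×ℝ×ℝ) + v ∈ Sball ∧ ((a,-1,c):ℝ×ℝ×ℝ) - v ∈ Sball := by
  obtain ⟨m, hmdef⟩ : ∃ m : ℝ, m = 1 - a - c^2/4 := ⟨_, rfl⟩
  have hm0 : 0 < m := by rw [hmdef, hac]; nlinarith
  set ε := min c (min (1+a) m) / 4 with hεdef
  have hε0 : 0 < ε := by
    have h := lt_min h1 (lt_min (show (0:ℝ) < 1+a by rw [hac]; linarith) hm0)
    rw [hεdef]; linarith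
  have hε1 : 4*ε ≤ c := by
    have := min_le_left c (min (1+a) m); rw [hεdef]; linarith
  have hε2 : 4*ε ≤ 1+a := by
    have h' := le_trans (min_le_right c (min (1+a) m)) (min_le_left (1+a) m)
    rw [hεdef]; linarith
  have hε3 : 4*ε ≤ m := by
    have h' := le_trans (min_le_right c (min (1+a) m)) (min_le_right (1+a) m)
    rw [hεdef]; linarith
  have hmc : c^2 = 4 - 4*a - 4*m := by rw [hmdef]; ring
  refine ⟨(ε, 0, -ε), vne1 hε0.ne' _ _, ?_, ?_⟩
  · rw [show ((a,-1,c):ℝ×ℝ×ℝ) + (ε,0,-ε) = ((a+ε,-1,c-ε):ℝ×ℝ×ℝ)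
        by norm_num [Prod.ext_iff, sub_eq_add_neg], memSball_iff]
    refine ⟨abs_le.2 ⟨by linarith, by linarith⟩, by norm_num,
      abs_le.2 ⟨by linarith, by linarith⟩, ?_, ?_, ?_, ?_⟩
    · intro _ _ _; nlinarith
    · intro h; linarith
    · intro h1' h2' h3'
      exact vgAuto (by linarith) (by linarith) h1' h2' h3'
    · intro h; linarith [hac, h1]
  · rw [show ((a,-1,c):ℝ×ℝ×ℝ) - (ε,0,-ε) = ((a-ε,-1,c+ε):ℝ×ℝ×ℝ)
        by norm_num [Prod.ext_iff, sub_eq_add_neg], memSball_iff]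
    refine ⟨abs_le.2 ⟨by linarith, by linarith⟩, by norm_num,
      abs_le.2 ⟨by linarith, by linarith⟩, ?_, ?_, ?_, ?_⟩
    · intro _ _ _; nlinarith
    · intro h; linarith
    · intro h1' h2' h3'
      exact vgAuto (by linarith) (by linarith) h1' h2' h3'
    · intro h; linarith

-- L8 : a = b = -1, 1 < c < 2
lemma leafL8 {c : ℝ} (h1 : 1 < c) (h2 : c < 2) :
    ∃ v : ℝ×ℝ×ℝ, v ≠ 0 ∧ ((-1,-1,c):ℝ×ℝ×ℝ) + v ∈ Sball ∧ ((-1,-1,c):ℝ×ℝ×ℝ) - v ∈ Sball := by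
  set γ := min (2-c) (c-1) / 2 with hγdef
  have hγ0 : 0 < γ := by
    have := lt_min (show (0:ℝ) < 2-c by linarith) (show (0:ℝ) < c-1 by linarith)
    rw [hγdef]; linarith
  have hγ1 : 2*γ ≤ 2-c := by
    have := min_le_left (2-c) (c-1); rw [hγdef]; linarith
  have hγ2 : 2*γ ≤ c-1 := by
    have := min_le_right (2-c) (c-1); rw [hγdef]; linarith
  refine ⟨(0, 0, γ), vne3 _ _ hγ0.ne', ?_, ?_⟩
  · rw [show ((-1,-1,c):ℝ×ℝ×ℝ) + (0,0,γ) = ((-1,-1,c+γ):ℝ×ℝ×ℝ)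
        by norm_num [Prod.ext_iff, sub_eq_add_neg], memSball_iff]
    refine ⟨by norm_num, by norm_num, abs_le.2 ⟨by linarith, by linarith⟩, ?_, ?_, ?_, ?_⟩
    · intro _ _ h; nlinarith
    · intro h; linarith
    · intro _ _ h; nlinarith
    · intro h; linarith
  · rw [show ((-1,-1,c):ℝ×ℝ×ℝ) - (0,0,γ) = ((-1,-1,c-γ):ℝ×ℝ×ℝ)
        by norm_num [Prod.ext_iff, sub_eq_add_neg], memSball_iff]
    refine ⟨by norm_num, by norm_num, abs_le.2 ⟨by linarith, by linarith⟩, ?_, ?_, ?_, ?_⟩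
    · intro _ _ h; nlinarith
    · intro h; linarith
    · intro _ _ h; nlinarith
    · intro h; linarith

-- L9 : b = -1, 0 ≤ c < 2, -1 < a, a + c²/4 < 1, |a+c-1| < 1
lemma leafL9 {a c : ℝ} (hc0 : 0 ≤ c) (hc2 : c < 2) (ha : -1 < a)
    (hnt : a + c^2/4 < 1) (hEu : a + c < 2) (hEl : 0 < a + c) :
    ∃ v : ℝ×ℝ×ℝ, v ≠ 0 ∧ ((a,-1,c):ℝ×ℝ×ℝ) + v ∈ Sball ∧ ((a,-1,c):ℝ×ℝ×ℝ) - v ∈ Sball := by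
  set ε := min (1+a) (min (2-a-c) (min (a+c) (1 - a - c^2/4))) / 2 with hεdef
  have hε0 : 0 < ε := by
    have h := lt_min (show (0:ℝ) < 1+a by linarith)
      (lt_min (show (0:ℝ) < 2-a-c by linarith)
        (lt_min (show (0:ℝ) < a+c by linarith) (show (0:ℝ) < 1-a-c^2/4 by linarith)))
    rw [hεdef]; linarith
  have hε1 : 2*ε ≤ 1+a := by
    have := min_le_left (1+a) (min (2-a-c) (min (a+c) (1 - a - c^2/4))); rw [hεdef]; linarith
  have hε2 : 2*ε ≤ 2-a-c := by
    have := le_trans (min_le_right (1+a) _) (min_le_left (2-a-c) (min (a+c) (1 - a - c^2/4)))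
    rw [hεdef]; linarith
  have hε3 : 2*ε ≤ a+c := by
    have := le_trans (min_le_right (1+a) _)
      (le_trans (min_le_right (2-a-c) _) (min_le_left (a+c) (1 - a - c^2/4)))
    rw [hεdef]; linarith
  have hε4 : 2*ε ≤ 1 - a - c^2/4 := by
    have := le_trans (min_le_right (1+a) _)
      (le_trans (min_le_right (2-a-c) _) (min_le_right (a+c) (1 - a - c^2/4)))
    rw [hεdef]; linarith
  have hcsq : 0 ≤ c^2/4 := by positivity
  refine ⟨(ε, 0, 0), vne1 hε0.ne' _ _, ?_, ?_⟩
  · rw [show ((a,-1,c):ℝ×ℝ×ℝ) + (ε,0,0) = ((a+ε,-1,c):ℝ×ℝ×ℝ)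
        by norm_num [Prod.ext_iff, sub_eq_add_neg], memSball_iff]
    refine ⟨abs_le.2 ⟨by linarith, by linarith⟩, by norm_num,
      abs_le.2 ⟨by linarith, by linarith⟩, ?_, ?_, ?_, ?_⟩
    · intro _ _ _; nlinarith
    · intro h; linarith
    · intro h1' h2' h3'
      exact vgAuto (by linarith) (by linarith) h1' h2' h3'
    · intro _ h; linarith
  · rw [show ((a,-1,c):ℝ×ℝ×ℝ) - (ε,0,0) = ((a-ε,-1,c):ℝ×ℝ×ℝ)
        by norm_num [Prod.ext_iff, sub_eq_add_neg], memSball_iff]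
    refine ⟨abs_le.2 ⟨by linarith, by linarith⟩, by norm_num,
      abs_le.2 ⟨by linarith, by linarith⟩, ?_, ?_, ?_, ?_⟩
    · intro _ _ _; nlinarith
    · intro h; linarith
    · intro h1' h2' h3'
      exact vgAuto (by linarith) (by linarith) h1' h2' h3'
    · intro _ h; linarith

-- L10 : a = 1, c = 0, -1 < b < 0
lemma leafL10 {b : ℝ} (h1 : -1 < b) (h2 : b < 0) :
    ∃ v : ℝ×ℝ×ℝ, v ≠ 0 ∧ ((1,b,0):ℝ×ℝ×ℝ) + v ∈ Sball ∧ ((1,b,0):ℝ×ℝ×ℝ) - v ∈ Sball := by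
  set ε := min (-b) (1+b) / 2 with hεdef
  have hε0 : 0 < ε := by
    have := lt_min (show (0:ℝ) < -b by linarith) (show (0:ℝ) < 1+b by linarith)
    rw [hεdef]; linarith
  have hε1 : 2*ε ≤ -b := by
    have := min_le_left (-b) (1+b); rw [hεdef]; linarith
  have hε2 : 2*ε ≤ 1+b := by
    have := min_le_right (-b) (1+b); rw [hεdef]; linarith
  refine ⟨(0, ε, 0), vne2 _ hε0.ne' _, ?_, ?_⟩
  · rw [show ((1,b,0):ℝ×ℝ×ℝ) + (0,ε,0) = ((1,b+ε,0):ℝ×ℝ×ℝ)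
        by norm_num [Prod.ext_iff, sub_eq_add_neg], memSball_iff]
    refine ⟨by norm_num, abs_le.2 ⟨by linarith, by linarith⟩,
      abs_le.2 ⟨by linarith, by linarith⟩, ?_, ?_, ?_, ?_⟩
    · intro _ h; linarith
    · intro _ h; linarith
    · intro h; linarith
    · intro _ h; linarith
  · rw [show ((1,b,0):ℝ×ℝ×ℝ) - (0,ε,0) = ((1,b-ε,0):ℝ×ℝ×ℝ)
        by norm_num [Prod.ext_iff, sub_eq_add_neg], memSball_iff]
    refine ⟨by norm_num, abs_le.2 ⟨by linarith, by linarith⟩,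
      abs_le.2 ⟨by linarith, by linarith⟩, ?_, ?_, ?_, ?_⟩
    · intro _ h; linarith
    · intro _ h; linarith
    · intro h; linarith
    · intro _ h; linarith

-- membership of the tangent family
lemma tangentMem {B s : ℝ} (hB0 : -1 ≤ B) (hB1 : B ≤ 0) (hs0 : 0 ≤ s) (hs1 : s ≤ 1) :
    ((1 + B*s^2, B, -(2*B*s)) : ℝ×ℝ×ℝ) ∈ Sball := by
  rw [memSball_iff]
  have hbs : -1 ≤ B*s^2 := by nlinarith
  have hbs2 : B*s^2 ≤ 0 := mul_nonpos_of_nonpos_of_nonneg hB1 (sq_nonneg s)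
  refine ⟨abs_le.2 ⟨by linarith, by linarith⟩, abs_le.2 ⟨by linarith, by linarith⟩,
    abs_le.2 ⟨by nlinarith [mul_nonneg (mul_nonneg (neg_nonneg.2 hB1) hs0) (by linarith : (0:ℝ) ≤ 2-s)],
      by nlinarith [mul_nonpos_of_nonpos_of_nonneg hB1 (sq_nonneg (1-s))]⟩, ?_, ?_, ?_, ?_⟩
  · intro _ _ _; nlinarith
  · intro h; linarith
  · intro h _ _; nlinarith
  · intro _ h h'
    nlinarith [mul_nonpos_of_nonpos_of_nonneg hB1 hs0]

-- L11 : tangency family, -1 < b < 0, 0 < c ≤ -2b, c² = 4b(a-1)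
lemma leafL11 {a b c : ℝ} (hb1 : -1 < b) (hb0 : b < 0) (hc0 : 0 < c) (hc2 : c ≤ -2*b)
    (htan : c^2 = 4*b*(a-1)) :
    ∃ v : ℝ×ℝ×ℝ, v ≠ 0 ∧ ((a,b,c):ℝ×ℝ×ℝ) + v ∈ Sball ∧ ((a,b,c):ℝ×ℝ×ℝ) - v ∈ Sball := by
  have h2b : (0:ℝ) < -(2*b) := by linarith
  obtain ⟨s, hs⟩ : ∃ s : ℝ, s = c / (-(2*b)) := ⟨_, rfl⟩
  have hs0 : 0 < s := by rw [hs]; exact div_pos hc0 h2b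
  have hs1 : s ≤ 1 := by rw [hs]; rw [div_le_one h2b]; linarith
  have hsc : c = -(2*b) * s := by
    rw [hs]
    rw [mul_div_cancel₀ _ h2b.ne']
  have haeq : a = 1 + b*s^2 := by
    have h4b : (4*b) ≠ 0 := by intro h; apply absurd h; intro h'; nlinarith
    have key : 4*b*(b*s^2) = 4*b*(a-1) := by
      calc 4*b*(b*s^2) = (-(2*b)*s)^2 := by ring
        _ = c^2 := by rw [← hsc]
        _ = 4*b*(a-1) := htan
    have := mul_left_cancel₀ h4b key
    linarith
  obtain ⟨κ, hκdef⟩ : ∃ κ : ℝ, κ = min (-b) (1+b) / 2 := ⟨_, rfl⟩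
  have hκ0 : 0 < κ := by
    have := lt_min (show (0:ℝ) < -b by linarith) (show (0:ℝ) < 1+b by linarith)
    rw [hκdef]; linarith
  have hκ1 : 2*κ ≤ -b := by
    have := min_le_left (-b) (1+b); rw [hκdef]; linarith
  have hκ2 : 2*κ ≤ 1+b := by
    have := min_le_right (-b) (1+b); rw [hκdef]; linarith
  refine ⟨(κ*s^2, κ, -(2*κ*s)), vne2 _ hκ0.ne' _, ?_, ?_⟩
  · have key : ((a,b,c):ℝ×ℝ×ℝ) + (κ*s^2, κ, -(2*κ*s))
        = ((1 + (b+κ)*s^2, b+κ, -(2*(b+κ)*s)) : ℝ×ℝ×ℝ) := by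
      have e1 : a + κ*s^2 = 1 + (b+κ)*s^2 := by linear_combination haeq
      have e3 : c + -(2*κ*s) = -(2*(b+κ)*s) := by linear_combination hsc
      rw [show ((a,b,c):ℝ×ℝ×ℝ) + (κ*s^2, κ, -(2*κ*s))
        = ((a + κ*s^2, b + κ, c + -(2*κ*s)) : ℝ×ℝ×ℝ) from rfl, e1, e3]
    rw [key]
    exact tangentMem (by linarith) (by linarith) hs0.le hs1
  · have key : ((a,b,c):ℝ×ℝ×ℝ) - (κ*s^2, κ, -(2*κ*s))
        = ((1 + (b-κ)*s^2, b-κ, -(2*(b-κ)*s)) : ℝ×ℝ×ℝ) := by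
      have e1 : a - κ*s^2 = 1 + (b-κ)*s^2 := by linear_combination haeq
      have e3 : c - -(2*κ*s) = -(2*(b-κ)*s) := by linear_combination hsc
      rw [show ((a,b,c):ℝ×ℝ×ℝ) - (κ*s^2, κ, -(2*κ*s))
        = ((a - κ*s^2, b - κ, c - -(2*κ*s)) : ℝ×ℝ×ℝ) from rfl, e1, e3]
    rw [key]
    exact tangentMem (by linarith) (by linarith) hs0.le hs1

-- L12 : -1 < b < 0, c > -2b, E = 1
lemma leafL12 {a b c : ℝ} (hb1 : -1 < b) (hb0 : b < 0) (hcb : -2*b < c) (hba : b ≤ a)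
    (hE : a + b + c = 1) :
    ∃ v : ℝ×ℝ×ℝ, v ≠ 0 ∧ ((a,b,c):ℝ×ℝ×ℝ) + v ∈ Sball ∧ ((a,b,c):ℝ×ℝ×ℝ) - v ∈ Sball := by
  have ha1 : a < 1 + b := by linarith
  obtain ⟨ε, hεdef⟩ : ∃ ε : ℝ, ε = min (-b) (min (1+b) (1-a)) / 2 := ⟨_, rfl⟩
  have hε0 : 0 < ε := by
    have := lt_min (show (0:ℝ) < -b by linarith)
      (lt_min (show (0:ℝ) < 1+b by linarith) (show (0:ℝ) < 1-a by linarith))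
    rw [hεdef]; linarith
  have hε1 : 2*ε ≤ -b := by
    have := min_le_left (-b) (min (1+b) (1-a)); rw [hεdef]; linarith
  have hε2 : 2*ε ≤ 1+b := by
    have := le_trans (min_le_right (-b) _) (min_le_left (1+b) (1-a)); rw [hεdef]; linarith
  have hε3 : 2*ε ≤ 1-a := by
    have := le_trans (min_le_right (-b) _) (min_le_right (1+b) (1-a)); rw [hεdef]; linarith
  refine ⟨(ε, ε, -(2*ε)), vne1 hε0.ne' _ _, ?_, ?_⟩
  · rw [show ((a,b,c):ℝ×ℝ×ℝ) + (ε,ε,-(2*ε)) = ((a+ε,b+ε,c-2*ε):ℝ×ℝ×ℝ)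
        by norm_num [Prod.ext_iff, sub_eq_add_neg] <;> ring, memSball_iff]
    refine ⟨abs_le.2 ⟨by linarith, by linarith⟩, abs_le.2 ⟨by linarith, by linarith⟩,
      abs_le.2 ⟨by linarith, by linarith⟩, ?_, ?_, ?_, ?_⟩
    · intro _ _ h; linarith
    · intro h; linarith
    · intro h1' h2' h3'
      exact vgAuto (by linarith) (by linarith) h1' h2' h3'
    · intro _ h; linarith
  · rw [show ((a,b,c):ℝ×ℝ×ℝ) - (ε,ε,-(2*ε)) = ((a-ε,b-ε,c+2*ε):ℝ×ℝ×ℝ)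
        by norm_num [Prod.ext_iff, sub_eq_add_neg] <;> ring, memSball_iff]
    refine ⟨abs_le.2 ⟨by linarith, by linarith⟩, abs_le.2 ⟨by linarith, by linarith⟩,
      abs_le.2 ⟨by linarith, by linarith⟩, ?_, ?_, ?_, ?_⟩
    · intro _ _ h; linarith
    · intro h; linarith
    · intro h1' h2' h3'
      exact vgAuto (by linarith) (by linarith) h1' h2' h3'
    · intro _ h; linarith

-- L13 : -1 < b < 0, 0 ≤ c < -2b, E = -1, margin m > 0
lemma leafL13 {a b c : ℝ} (hb1 : -1 < b) (hb0 : b < 0) (hc0 : 0 ≤ c) (hcb : c < -2*b)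
    (hba : b ≤ a) (hE : a + b + c = -1) (hm : 0 < 4*b*(a-1) - c^2) :
    ∃ v : ℝ×ℝ×ℝ, v ≠ 0 ∧ ((a,b,c):ℝ×ℝ×ℝ) + v ∈ Sball ∧ ((a,b,c):ℝ×ℝ×ℝ) - v ∈ Sball := by
  have ha0 : a < 0 := by linarith
  have ha1 : -1 < a := by linarith
  obtain ⟨m, hmdef⟩ : ∃ m : ℝ, m = 4*b*(a-1) - c^2 := ⟨_, rfl⟩
  have hm0 : 0 < m := by rw [hmdef]; exact hm
  obtain ⟨ε, hεdef⟩ : ∃ ε : ℝ, ε = min (-b) (min (1+b) (min 1 (m/14))) / 2 := ⟨_, rfl⟩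
  have hε0 : 0 < ε := by
    have := lt_min (show (0:ℝ) < -b by linarith)
      (lt_min (show (0:ℝ) < 1+b by linarith)
        (lt_min one_pos (show (0:ℝ) < m/14 by linarith)))
    rw [hεdef]; linarith
  have hε1 : 2*ε ≤ -b := by
    have := min_le_left (-b) (min (1+b) (min 1 (m/14))); rw [hεdef]; linarith
  have hε2 : 2*ε ≤ 1+b := by
    have := le_trans (min_le_right (-b) _) (min_le_left (1+b) (min 1 (m/14)))
    rw [hεdef]; linarith
  have hε3 : 2*ε ≤ 1 := by
    have := le_trans (min_le_right (-b) _) (le_trans (min_le_right (1+b) _) (min_le_left 1 (m/14)))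
    rw [hεdef]; linarith
  have hε4 : 14*ε ≤ m/2 := by
    have := le_trans (min_le_right (-b) _) (le_trans (min_le_right (1+b) _) (min_le_right 1 (m/14)))
    rw [hεdef]; linarith
  have hmc : c^2 = 4*b*(a-1) - m := by rw [hmdef]; ring
  have hc2 : c < 2 := by linarith
  refine ⟨(ε, ε, -(2*ε)), vne1 hε0.ne' _ _, ?_, ?_⟩
  · rw [show ((a,b,c):ℝ×ℝ×ℝ) + (ε,ε,-(2*ε)) = ((a+ε,b+ε,c-2*ε):ℝ×ℝ×ℝ)
        by norm_num [Prod.ext_iff, sub_eq_add_neg] <;> ring, memSball_iff]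
    refine ⟨abs_le.2 ⟨by linarith, by linarith⟩, abs_le.2 ⟨by linarith, by linarith⟩,
      abs_le.2 ⟨by linarith, by linarith⟩, ?_, ?_, ?_, ?_⟩
    · intro _ _ _
      nlinarith [mul_nonneg hε0.le hc0, sq_nonneg ε, mul_nonneg hε0.le hε0.le]
    · intro h; linarith
    · intro h1' h2' h3'
      exact vgAuto (by linarith) (by linarith) h1' h2' h3'
    · intro h1' h2' h3'
      exact vgAuto2 (by linarith) h1' h2' h3'
  · rw [show ((a,b,c):ℝ×ℝ×ℝ) - (ε,ε,-(2*ε)) = ((a-ε,b-ε,c+2*ε):ℝ×ℝ×ℝ)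
        by norm_num [Prod.ext_iff, sub_eq_add_neg] <;> ring, memSball_iff]
    refine ⟨abs_le.2 ⟨by linarith, by linarith⟩, abs_le.2 ⟨by linarith, by linarith⟩,
      abs_le.2 ⟨by linarith, by linarith⟩, ?_, ?_, ?_, ?_⟩
    · intro _ _ _
      nlinarith [mul_nonneg hε0.le hc0, sq_nonneg ε, mul_nonneg hε0.le (show (0:ℝ) ≤ -b by linarith),
        mul_nonneg hε0.le (show (0:ℝ) ≤ 1-a by linarith)]
    · intro h; linarith
    · intro h1' h2' h3'
      exact vgAuto (by linarith) (by linarith) h1' h2' h3'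
    · intro h1' h2' h3'
      exact vgAuto2 (by linarith) h1' h2' h3'

-- L14 : -1 < b < 0, 0 < c < -2b, |E| < 1, margin m > 0
lemma leafL14 {a b c : ℝ} (hb1 : -1 < b) (hb0 : b < 0) (hc0 : 0 < c) (hcb : c < -2*b)
    (hba : b ≤ a) (hEu : a + b + c < 1) (hEl : -1 < a + b + c) (hm : 0 < 4*b*(a-1) - c^2) :
    ∃ v : ℝ×ℝ×ℝ, v ≠ 0 ∧ ((a,b,c):ℝ×ℝ×ℝ) + v ∈ Sball ∧ ((a,b,c):ℝ×ℝ×ℝ) - v ∈ Sball := by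
  have ha1 : a < 1 := by nlinarith
  have ha0 : -1 < a := by linarith
  obtain ⟨m, hmdef⟩ : ∃ m : ℝ, m = 4*b*(a-1) - c^2 := ⟨_, rfl⟩
  have hm0 : 0 < m := by rw [hmdef]; exact hm
  obtain ⟨ε, hεdef⟩ : ∃ ε : ℝ, ε = min (1-a) (min (1+a) (min (1-(a+b+c)) (min (1+(a+b+c)) (m/4)))) / 2 := ⟨_, rfl⟩
  have hε0 : 0 < ε := by
    have := lt_min (show (0:ℝ) < 1-a by linarith)
      (lt_min (show (0:ℝ) < 1+a by linarith)
        (lt_min (show (0:ℝ) < 1-(a+b+c) by linarith)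
          (lt_min (show (0:ℝ) < 1+(a+b+c) by linarith) (show (0:ℝ) < m/4 by linarith))))
    rw [hεdef]; linarith
  have hε1 : 2*ε ≤ 1-a := by
    have := min_le_left (1-a) (min (1+a) (min (1-(a+b+c)) (min (1+(a+b+c)) (m/4))))
    rw [hεdef]; linarith
  have hε2 : 2*ε ≤ 1+a := by
    have := le_trans (min_le_right (1-a) (min (1+a) (min (1-(a+b+c)) (min (1+(a+b+c)) (m/4)))))
      (min_le_left (1+a) (min (1-(a+b+c)) (min (1+(a+b+c)) (m/4))))
    rw [hεdef]; linarith
  have hε3 : 2*ε ≤ 1-(a+b+c) := by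
    have := le_trans (min_le_right (1-a) (min (1+a) (min (1-(a+b+c)) (min (1+(a+b+c)) (m/4)))))
      (le_trans (min_le_right (1+a) (min (1-(a+b+c)) (min (1+(a+b+c)) (m/4))))
        (min_le_left (1-(a+b+c)) (min (1+(a+b+c)) (m/4))))
    rw [hεdef]; linarith
  have hε4 : 2*ε ≤ 1+(a+b+c) := by
    have := le_trans (min_le_right (1-a) (min (1+a) (min (1-(a+b+c)) (min (1+(a+b+c)) (m/4)))))
      (le_trans (min_le_right (1+a) (min (1-(a+b+c)) (min (1+(a+b+c)) (m/4))))
        (le_trans (min_le_right (1-(a+b+c)) (min (1+(a+b+c)) (m/4)))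
          (min_le_left (1+(a+b+c)) (m/4))))
    rw [hεdef]; linarith
  have hε5 : 2*ε ≤ m/4 := by
    have := le_trans (min_le_right (1-a) (min (1+a) (min (1-(a+b+c)) (min (1+(a+b+c)) (m/4)))))
      (le_trans (min_le_right (1+a) (min (1-(a+b+c)) (min (1+(a+b+c)) (m/4))))
        (le_trans (min_le_right (1-(a+b+c)) (min (1+(a+b+c)) (m/4)))
          (min_le_right (1+(a+b+c)) (m/4))))
    rw [hεdef]; linarith
  have hmc : c^2 = 4*b*(a-1) - m := by rw [hmdef]; ring
  refine ⟨(ε, 0, 0), vne1 hε0.ne' _ _, ?_, ?_⟩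
  · rw [show ((a,b,c):ℝ×ℝ×ℝ) + (ε,0,0) = ((a+ε,b,c):ℝ×ℝ×ℝ)
        by norm_num [Prod.ext_iff, sub_eq_add_neg], memSball_iff]
    refine ⟨abs_le.2 ⟨by linarith, by linarith⟩, abs_le.2 ⟨by linarith, by linarith⟩,
      abs_le.2 ⟨by linarith, by linarith⟩, ?_, ?_, ?_, ?_⟩
    · intro _ _ _; nlinarith [mul_nonneg hε0.le (show (0:ℝ) ≤ -b by linarith)]
    · intro h; linarith
    · intro h1' h2' h3'
      exact vgAuto (by linarith) (by linarith) h1' h2' h3'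
    · intro _ h; linarith
  · rw [show ((a,b,c):ℝ×ℝ×ℝ) - (ε,0,0) = ((a-ε,b,c):ℝ×ℝ×ℝ)
        by norm_num [Prod.ext_iff, sub_eq_add_neg], memSball_iff]
    refine ⟨abs_le.2 ⟨by linarith, by linarith⟩, abs_le.2 ⟨by linarith, by linarith⟩,
      abs_le.2 ⟨by linarith, by linarith⟩, ?_, ?_, ?_, ?_⟩
    · intro _ _ _; nlinarith [mul_nonneg hε0.le (show (0:ℝ) ≤ -b by linarith)]
    · intro h; linarith
    · intro h1' h2' h3'
      exact vgAuto (by linarith) (by linarith) h1' h2' h3'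
    · intro _ h; linarith

-- L15 : -1 < b < 0, vertex not active, |E| < 1, -1 < a < 1
lemma leafL15 {a b c : ℝ} (hb1 : -1 < b) (hb0 : b < 0) (hc0 : 0 ≤ c)
    (hguard : c = 0 ∨ -2*b ≤ c) (hba : b ≤ a) (ha1 : a < 1)
    (hEu : a + b + c < 1) (hEl : -1 < a + b + c) :
    ∃ v : ℝ×ℝ×ℝ, v ≠ 0 ∧ ((a,b,c):ℝ×ℝ×ℝ) + v ∈ Sball ∧ ((a,b,c):ℝ×ℝ×ℝ) - v ∈ Sball := by
  have ha0 : -1 < a := by linarith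
  obtain ⟨ε, hεdef⟩ : ∃ ε : ℝ, ε = min (1-a) (min (1+a) (min (1-(a+b+c)) (1+(a+b+c)))) / 2 := ⟨_, rfl⟩
  have hε0 : 0 < ε := by
    have := lt_min (show (0:ℝ) < 1-a by linarith)
      (lt_min (show (0:ℝ) < 1+a by linarith)
        (lt_min (show (0:ℝ) < 1-(a+b+c) by linarith) (show (0:ℝ) < 1+(a+b+c) by linarith)))
    rw [hεdef]; linarith
  have hε1 : 2*ε ≤ 1-a := by
    have := min_le_left (1-a) (min (1+a) (min (1-(a+b+c)) (1+(a+b+c))))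
    rw [hεdef]; linarith
  have hε2 : 2*ε ≤ 1+a := by
    have := le_trans (min_le_right (1-a) (min (1+a) (min (1-(a+b+c)) (1+(a+b+c)))))
      (min_le_left (1+a) (min (1-(a+b+c)) (1+(a+b+c))))
    rw [hεdef]; linarith
  have hε3 : 2*ε ≤ 1-(a+b+c) := by
    have := le_trans (min_le_right (1-a) (min (1+a) (min (1-(a+b+c)) (1+(a+b+c)))))
      (le_trans (min_le_right (1+a) (min (1-(a+b+c)) (1+(a+b+c))))
        (min_le_left (1-(a+b+c)) (1+(a+b+c))))
    rw [hεdef]; linarith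
  have hε4 : 2*ε ≤ 1+(a+b+c) := by
    have := le_trans (min_le_right (1-a) (min (1+a) (min (1-(a+b+c)) (1+(a+b+c)))))
      (le_trans (min_le_right (1+a) (min (1-(a+b+c)) (1+(a+b+c))))
        (min_le_right (1-(a+b+c)) (1+(a+b+c))))
    rw [hεdef]; linarith
  refine ⟨(ε, 0, 0), vne1 hε0.ne' _ _, ?_, ?_⟩
  · rw [show ((a,b,c):ℝ×ℝ×ℝ) + (ε,0,0) = ((a+ε,b,c):ℝ×ℝ×ℝ)
        by norm_num [Prod.ext_iff, sub_eq_add_neg], memSball_iff]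
    refine ⟨abs_le.2 ⟨by linarith, by linarith⟩, abs_le.2 ⟨by linarith, by linarith⟩,
      abs_le.2 ⟨by linarith, by linarith⟩, ?_, ?_, ?_, ?_⟩
    · intro _ h2' h3'; rcases hguard with h | h <;> linarith
    · intro h; linarith
    · intro h1' h2' h3'
      exact vgAuto (by linarith) (by linarith) h1' h2' h3'
    · intro _ h; linarith
  · rw [show ((a,b,c):ℝ×ℝ×ℝ) - (ε,0,0) = ((a-ε,b,c):ℝ×ℝ×ℝ)
        by norm_num [Prod.ext_iff, sub_eq_add_neg], memSball_iff]
    refine ⟨abs_le.2 ⟨by linarith, by linarith⟩, abs_le.2 ⟨by linarith, by linarith⟩,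
      abs_le.2 ⟨by linarith, by linarith⟩, ?_, ?_, ?_, ?_⟩
    · intro _ h2' h3'; rcases hguard with h | h <;> linarith
    · intro h; linarith
    · intro h1' h2' h3'
      exact vgAuto (by linarith) (by linarith) h1' h2' h3'
    · intro _ h; linarith

lemma core {a b c : ℝ} (hc : 0 ≤ c) (hba : b ≤ a) (hS : ((a,b,c):ℝ×ℝ×ℝ) ∈ Sball) :
    ((∃ t ∈ Set.Icc (0:ℝ) 1, ((a,b,c):ℝ×ℝ×ℝ) = (t, -1, 2*Real.sqrt (1-t))) ∨
     ((a,b,c):ℝ×ℝ×ℝ) = (-1,-1,1) ∨ ((a,b,c):ℝ×ℝ×ℝ) = (-1,-1,3) ∨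
     ((a,b,c):ℝ×ℝ×ℝ) = (1,0,0) ∨ ((a,b,c):ℝ×ℝ×ℝ) = (0,-1,0)) ∨
    ∃ v : ℝ×ℝ×ℝ, v ≠ 0 ∧ ((a,b,c):ℝ×ℝ×ℝ) + v ∈ Sball ∧ ((a,b,c):ℝ×ℝ×ℝ) - v ∈ Sball := by
  rw [memSball_iff] at hS
  obtain ⟨h1, h2, h3, H1, H2, H3, H4⟩ := hS
  rw [abs_le] at h1 h2 h3
  rcases le_or_gt 0 b with hb0 | hb0
  · -- b ≥ 0
    rcases eq_or_lt_of_le h1.2 with ha1 | ha1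
    · -- a = 1 forces (1,0,0)
      left; right; right; right; left
      have hb : b = 0 := by linarith [h3.2]
      have hc0 : c = 0 := by linarith [h3.2]
      simp [Prod.ext_iff, ha1, hb, hc0]
    · rcases eq_or_lt_of_le h3.2 with hE | hE
      · exact Or.inr (leafL1 hb0 hba ha1 hc hE)
      · exact Or.inr (leafL2 hb0 hba ha1 hc hE)
  · -- b < 0
    rcases eq_or_lt_of_le h2.1 with hbm | hbm
    · -- b = -1
      have hbm' : b = -1 := hbm.symm
      subst hbm'
      rcases lt_trichotomy c 2 with hc2 | hc2 | hc2
      · -- c < 2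
        have hVf : a + c^2/4 ≤ 1 := by
          rcases eq_or_lt_of_le hc with hc0 | hc0
          · rw [← hc0]; norm_num; linarith [h1.2]
          · have := H1 (by norm_num) hc0 (by linarith)
            nlinarith
        rcases eq_or_lt_of_le hVf with htan | hVlt
        · -- tangency: member of family 1 with t = a
          left; left
          have hc4 : c^2 < 4 := by nlinarith
          refine ⟨a, ⟨by nlinarith, h1.2⟩, ?_⟩
          have h14 : 1 - a = (c/2)^2 := by nlinarith
          have hsq : 2 * Real.sqrt (1-a) = c := by
            rw [h14, Real.sqrt_sq (by linarith : (0:ℝ) ≤ c/2)]; ring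
          rw [hsq]
        · -- not tangent
          have hE2 : a + c ≤ 2 := by linarith [h3.2]
          rcases eq_or_lt_of_le hE2 with hE1 | hE1
          · exfalso; nlinarith [sq_nonneg (1 - c/2)]
          · have hE0 : 0 ≤ a + c := by linarith [h3.1]
            rcases eq_or_lt_of_le hE0 with hE0' | hE0'
            · -- E = -1
              rcases eq_or_lt_of_le h1.1 with ham | ham
              · -- a = -1, c = 1
                left; right; left
                simp [Prod.ext_iff]
                constructor
                · linarith
                · linarith
              · rcases eq_or_lt_of_le hc with hc0 | hc0
                · -- c = 0, a = 0 : (0,-1,0)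
                  left; right; right; right; right
                  simp [Prod.ext_iff]
                  constructor
                  · linarith
                  · linarith
                · exact Or.inr (leafL7 (by linarith) hc0 (by linarith))
            · -- -1 < E < 1
              rcases eq_or_lt_of_le h1.1 with ham | ham
              · have ham' : a = -1 := ham.symm
                subst ham'
                exact Or.inr (leafL8 (by linarith) hc2)
              · exact Or.inr (leafL9 hc hc2 ham hVlt (by linarith) (by linarith))
      · -- c = 2
        subst hc2
        have ha0 : a ≤ 0 := by linarith [h3.2]
        rcases eq_or_lt_of_le ha0 with ha00 | ha00
        · -- a = 0 : family1 at t = 0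
          left; left
          refine ⟨0, by norm_num, ?_⟩
          simp [Prod.ext_iff, ha00, Real.sqrt_one]
        · rcases eq_or_lt_of_le h1.1 with ham | ham
          · have ham' : a = -1 := ham.symm
            subst ham'
            exact Or.inr leafL3
          · exact Or.inr (leafL4 ham ha00)
      · -- c > 2
        have hE2 : a + c ≤ 2 := by linarith [h3.2]
        rcases eq_or_lt_of_le h1.1 with ham | ham
        · have ham' : a = -1 := ham.symm
          subst ham'
          have hc3 : c ≤ 3 := by linarith [h3.2]
          rcases eq_or_lt_of_le hc3 with hc3' | hc3'
          · left; right; right; left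
            simp [Prod.ext_iff, hc3']
          · exact Or.inr (leafL5 hc2 hc3')
        · exact Or.inr (leafL6 ham hc2 hE2)
    · -- -1 < b < 0
      rcases eq_or_lt_of_le h1.2 with ha1 | ha1
      · -- a = 1 forces c = 0
        have hc0 : c = 0 := by
          by_contra h
          have hcpos : 0 < c := lt_of_le_of_ne hc (Ne.symm h)
          rcases lt_or_ge c (-2*b) with hlt | hge
          · have := H1 hb0 hcpos hlt; nlinarith
          · nlinarith [h3.2]
        subst ha1; subst hc0
        exact Or.inr (leafL10 hbm hb0)
      · -- a < 1
        by_cases htan : c^2 = 4*b*(a-1) ∧ c ≤ -2*b ∧ 0 < c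
        · exact Or.inr (leafL11 hbm hb0 htan.2.2 htan.2.1 htan.1)
        · rcases eq_or_lt_of_le h3.2 with hE1 | hE1
          · -- E = 1
            have hcb : -2*b < c := by
              rcases lt_trichotomy c (-2*b) with hlt | heq | hgt
              · exfalso
                have hcpos : 0 < c := by
                  rcases eq_or_lt_of_le hc with h0 | h0
                  · exfalso; nlinarith
                  · exact h0
                have := H1 hb0 hcpos hlt
                nlinarith [sq_nonneg (c + 2*b)]
              · exfalso
                apply htan
                refine ⟨by nlinarith, le_of_eq heq, by linarith⟩
              · exact hgt
            exact Or.inr (leafL12 hbm hb0 hcb hba hE1)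
          · rcases eq_or_lt_of_le h3.1 with hEm | hEm
            · -- E = -1
              have hcb : c < -2*b := by
                by_contra hge
                push_neg at hge
                linarith
              have hm : 0 < 4*b*(a-1) - c^2 := by
                rcases eq_or_lt_of_le hc with h0 | h0
                · have : c = 0 := h0.symm
                  subst this
                  nlinarith
                · have hle := H1 hb0 h0 hcb
                  rcases eq_or_lt_of_le hle with heq | hlt2
                  · exfalso; exact htan ⟨heq, hcb.le, h0⟩
                  · linarith
              exact Or.inr (leafL13 hbm hb0 hc hcb hba hEm.symm hm)
            · -- |E| < 1
              rcases lt_or_ge c (-2*b) with hlt | hge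
              · rcases eq_or_lt_of_le hc with h0 | h0
                · exact Or.inr (leafL15 hbm hb0 hc (Or.inl h0.symm) hba ha1 hE1 hEm)
                · have hle := H1 hb0 h0 hlt
                  have hm : 0 < 4*b*(a-1) - c^2 := by
                    rcases eq_or_lt_of_le hle with heq | hlt2
                    · exfalso; exact htan ⟨heq, hlt.le, h0⟩
                    · linarith
                  exact Or.inr (leafL14 hbm hb0 h0 hlt hba hE1 hEm hm)
              · exact Or.inr (leafL15 hbm hb0 hc (Or.inr hge) hba ha1 hE1 hEm)


lemma T2list {q : ℝ×ℝ×ℝ}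
    (h : (∃ t ∈ Set.Icc (0:ℝ) 1, q = (t, -1, 2*Real.sqrt (1-t))) ∨
      q = ((-1,-1,1):ℝ×ℝ×ℝ) ∨ q = ((-1,-1,3):ℝ×ℝ×ℝ) ∨ q = ((1,0,0):ℝ×ℝ×ℝ) ∨
      q = ((0,-1,0):ℝ×ℝ×ℝ)) : listP q := by
  rcases h with ⟨t, ht, heq⟩ | heq | heq | heq | heq
  · exact Or.inl ⟨t, ht, Or.inl heq⟩
  · exact Or.inr (Or.inr (Or.inl heq))
  · exact Or.inr (Or.inr (Or.inr (Or.inr (Or.inl heq))))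
  · exact Or.inr (Or.inr (Or.inr (Or.inr (Or.inr (Or.inl heq)))))
  · exact Or.inr (Or.inr (Or.inr (Or.inr (Or.inr (Or.inr (Or.inr (Or.inr heq)))))))

/-- Gámez-Merino–Muñoz-Fernández–Sánchez–Seoane-Sepúlveda: the extreme points of
the unit ball of real 2-homogeneous polynomials `a x² + b y² + c xy` with the sup
norm over the unit square `[0,1]²`. -/
theorem extremePoints_unitBall_P2_square (p : ℝ × ℝ × ℝ) :
    p ∈ Set.extremePoints ℝ
        {q : ℝ × ℝ × ℝ | ∀ x y : ℝ, x ∈ Set.Icc (0 : ℝ) 1 → y ∈ Set.Icc (0 : ℝ) 1 →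
          |q.1 * x ^ 2 + q.2.1 * y ^ 2 + q.2.2 * x * y| ≤ 1} ↔
      (∃ t ∈ Set.Icc (0 : ℝ) 1,
        p = (t, -1, 2 * Real.sqrt (1 - t)) ∨
        p = (-t, 1, -(2 * Real.sqrt (1 - t))) ∨
        p = (-1, t, 2 * Real.sqrt (1 - t)) ∨
        p = (1, -t, -(2 * Real.sqrt (1 - t)))) ∨
      p = (1, 1, -1) ∨ p = (-1, -1, 1) ∨
      p = (1, 1, -3) ∨ p = (-1, -1, 3) ∨
      p = (1, 0, 0) ∨ p = (-1, 0, 0) ∨ p = (0, 1, 0) ∨ p = (0, -1, 0) := by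
  rw [show {q : ℝ × ℝ × ℝ | ∀ x y : ℝ, x ∈ Set.Icc (0 : ℝ) 1 → y ∈ Set.Icc (0 : ℝ) 1 →
      |q.1 * x ^ 2 + q.2.1 * y ^ 2 + q.2.2 * x * y| ≤ 1} = Sball from rfl, crit_iff p]
  constructor
  · intro hcrit
    suffices h : listP p from h
    obtain ⟨a, b, c⟩ := p
    rcases le_or_gt 0 c with hc | hc
    · rcases le_or_gt b a with hba | hba
      · rcases core hc hba hcrit.1 with hT | ⟨v, hv, hm1, hm2⟩
        · exact T2list hT
        · exact absurd (hcrit.2 v hm1 hm2) hv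
      · have hcrit' : crit ((b,a,c) : ℝ×ℝ×ℝ) := crit_swap hcrit
        rcases core hc hba.le hcrit'.1 with hT | ⟨v, hv, hm1, hm2⟩
        · exact listP_swap (T2list hT)
        · exact absurd (hcrit'.2 v hm1 hm2) hv
    · have hcrit' : crit ((-a,-b,-c) : ℝ×ℝ×ℝ) := crit_neg hcrit
      rcases le_or_gt a b with hab | hab
      · rcases core (show (0:ℝ) ≤ -c by linarith) (show -b ≤ -a by linarith) hcrit'.1 with
          hT | ⟨v, hv, hm1, hm2⟩
        · exact listP_neg (T2list hT)
        · exact absurd (hcrit'.2 v hm1 hm2) hv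
      · have hcrit'' : crit ((-b,-a,-c) : ℝ×ℝ×ℝ) := crit_swap hcrit'
        rcases core (show (0:ℝ) ≤ -c by linarith) (show -a ≤ -b by linarith) hcrit''.1 with
          hT | ⟨v, hv, hm1, hm2⟩
        · exact listP_neg (listP_swap (T2list hT))
        · exact absurd (hcrit''.2 v hm1 hm2) hv
  · intro hlist
    rcases hlist with ⟨t, ht, h | h | h | h⟩ | h | h | h | h | h | h | h | h <;> rw [h]
    · exact crit_family1 ht
    · rw [show ((-t, 1, -(2 * Real.sqrt (1 - t))) : ℝ×ℝ×ℝ)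
          = -(t, -1, 2 * Real.sqrt (1 - t)) by norm_num [Prod.ext_iff]]
      exact crit_neg (crit_family1 ht)
    · exact crit_swap (crit_family1 ht)
    · rw [show ((1, -t, -(2 * Real.sqrt (1 - t))) : ℝ×ℝ×ℝ)
          = swp (-(t, -1, 2 * Real.sqrt (1 - t))) by norm_num [Prod.ext_iff, swp]]
      exact crit_swap (crit_neg (crit_family1 ht))
    · rw [show ((1,1,-1) : ℝ×ℝ×ℝ) = -(-1,-1,1) by norm_num [Prod.ext_iff]]
      exact crit_neg crit_m1m11
    · exact crit_m1m11
    · rw [show ((1,1,-3) : ℝ×ℝ×ℝ) = -(-1,-1,3) by norm_num [Prod.ext_iff]]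
      exact crit_neg crit_m1m13
    · exact crit_m1m13
    · exact crit_100
    · rw [show ((-1,0,0) : ℝ×ℝ×ℝ) = -(1,0,0) by norm_num [Prod.ext_iff]]
      exact crit_neg crit_100
    · exact crit_swap crit_100
    · exact crit_0m10
end

section
/- Let L* be the infimum of all constants L ≥ 0 such that for every 2-homogeneous polynomial P(x,y) = ax² + by² + cxy with real coefficients one has (|a|^{4/3} + |b|^{4/3} + 2·|c/2|^{4/3})^{3/4} ≤ L · sup{|P(x,y)| : (x,y) ∈ [−1,1]²}. Then L* = sup{ (2 t^{4/3} + 2 (t(1−t))^{2/3})^{3/4} : t ∈ [1/2, 1] } (≈ 1.7700, attained at t₀ ≈ 0.9147). -/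
open Set

noncomputable def gBH (t : ℝ) : ℝ := 2 * t ^ (4 / 3 : ℝ) + 2 * (t * (1 - t)) ^ (2 / 3 : ℝ)

noncomputable def fBH (t : ℝ) : ℝ := gBH t ^ (3 / 4 : ℝ)

lemma gBH_one : gBH 1 = 2 := by
  simp [gBH, Real.zero_rpow (by norm_num : (2/3:ℝ) ≠ 0), Real.one_rpow]

lemma gBH_nonneg {t : ℝ} (ht : t ∈ Icc (1/2:ℝ) 1) : 0 ≤ gBH t := by
  obtain ⟨h1, h2⟩ := ht
  have : (0:ℝ) ≤ t := by linarith
  have : (0:ℝ) ≤ t * (1 - t) := by nlinarith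
  unfold gBH
  positivity

lemma rpow43_le {x : ℝ} (h0 : 0 ≤ x) (h1 : x ≤ 1) : x ^ (4/3:ℝ) ≤ x := by
  rcases eq_or_lt_of_le h0 with h | h
  · simp [← h, Real.zero_rpow (by norm_num : (4/3:ℝ) ≠ 0)]
  · calc x ^ (4/3:ℝ) ≤ x ^ (1:ℝ) := Real.rpow_le_rpow_of_exponent_ge h h1 (by norm_num)
      _ = x := Real.rpow_one x

/-- Core case: `a ≥ 0`, `c ≥ 0`, `|b| ≤ a`. -/
lemma key0 (a b c : ℝ) (ha : 0 ≤ a) (hc : 0 ≤ c) (hba : |b| ≤ a)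
    (h : ∀ x ∈ Icc (-1:ℝ) 1, ∀ y ∈ Icc (-1:ℝ) 1, |a*x^2 + b*y^2 + c*x*y| ≤ 1) :
    ∃ t ∈ Icc (1/2:ℝ) 1,
      |a| ^ (4/3:ℝ) + |b| ^ (4/3:ℝ) + 2 * |c/2| ^ (4/3:ℝ) ≤ gBH t := by
  have hmem1 : (1:ℝ) ∈ Icc (-1:ℝ) 1 := by constructor <;> norm_num
  have hmem0 : (0:ℝ) ∈ Icc (-1:ℝ) 1 := by constructor <;> norm_num
  have ha1 : a ≤ 1 := by
    have h0 := h 1 hmem1 0 hmem0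
    have : |a| ≤ 1 := by simpa using h0
    linarith [le_abs_self a]
  have habc : a + b + c ≤ 1 := by
    have h0 := (abs_le.mp (h 1 hmem1 1 hmem1)).2
    nlinarith [h0]
  have hc2 : (0:ℝ) ≤ c/2 := by positivity
  rw [abs_of_nonneg ha, abs_of_nonneg hc2]
  rcases le_total 0 b with hb | hb
  · refine ⟨1, by constructor <;> norm_num, ?_⟩
    rw [gBH_one, abs_of_nonneg hb]
    have h1 : a ^ (4/3:ℝ) ≤ a := rpow43_le ha ha1
    have h2 : b ^ (4/3:ℝ) ≤ b := rpow43_le hb (by linarith [le_abs_self b])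
    have h3 : (c/2) ^ (4/3:ℝ) ≤ c/2 := rpow43_le hc2 (by linarith)
    linarith
  · have hbb : |b| = -b := abs_of_nonpos hb
    rw [hbb] at hba ⊢
    rcases le_total c (2 * (-b)) with hcb | hcb
    · -- c ≤ -2b : use the interior maximum constraint
      rcases eq_or_lt_of_le hb with rfl | hb0
      · -- b = 0, hence c = 0
        have hc0 : c = 0 := le_antisymm (by linarith) hc
        refine ⟨1, by constructor <;> norm_num, ?_⟩
        rw [gBH_one, hc0]
        have h1 : a ^ (4/3:ℝ) ≤ a := rpow43_le ha ha1
        norm_num [Real.zero_rpow (by norm_num : (4/3:ℝ) ≠ 0)]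
        linarith
      · set β : ℝ := -b with hβdef
        have hβ : 0 < β := by simp only [hβdef]; linarith
        have hy : c/(2*β) ∈ Icc (-1:ℝ) 1 := by
          constructor
          · have : (0:ℝ) ≤ c/(2*β) := by positivity
            linarith
          · rw [div_le_one (by linarith)]; linarith
        have hq := (abs_le.mp (h 1 hmem1 _ hy)).2
        have hqq : a + c^2/(4*β) ≤ 1 := by
          have e : a*1^2 + b*(c/(2*β))^2 + c*1*(c/(2*β)) = a + c^2/(4*β) := by
            rw [hβdef]; field_simp [hb0.ne]; ring
          linarith [e ▸ hq]
        have hc2' : c^2 ≤ 4*(β*(1-a)) := by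
          have h4β : (0:ℝ) < 4*β := by linarith
          nlinarith [(div_le_iff₀ h4β).mp (by linarith : c^2/(4*β) ≤ 1 - a)]
        have e1 : (c/2) ^ (4/3:ℝ) = ((c/2)^2) ^ (2/3:ℝ) := by
          rw [← Real.rpow_natCast (c/2) 2, ← Real.rpow_mul hc2]
          norm_num
        have e2 : ((c/2)^2) ^ (2/3:ℝ) ≤ (β*(1-a)) ^ (2/3:ℝ) :=
          Real.rpow_le_rpow (by positivity) (by nlinarith) (by norm_num)
        have e3 : (β*(1-a)) ^ (2/3:ℝ) ≤ (a*(1-a)) ^ (2/3:ℝ) :=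
          Real.rpow_le_rpow (by nlinarith) (by nlinarith) (by norm_num)
        have e4 : β ^ (4/3:ℝ) ≤ a ^ (4/3:ℝ) :=
          Real.rpow_le_rpow (by linarith) hba (by norm_num)
        rcases le_total (1/2:ℝ) a with hha | hha
        · refine ⟨a, ⟨hha, ha1⟩, ?_⟩
          rw [e1]
          unfold gBH
          linarith
        · refine ⟨1-a, ⟨by linarith, by linarith⟩, ?_⟩
          have e5 : a ^ (4/3:ℝ) ≤ (1-a) ^ (4/3:ℝ) :=
            Real.rpow_le_rpow ha (by linarith) (by norm_num)
          have e6 : (1-a)*(1-(1-a)) = a*(1-a) := by ring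
          rw [e1]
          unfold gBH
          rw [e6]
          linarith
    · -- -2b ≤ c : crude bound by 2
      refine ⟨1, by constructor <;> norm_num, ?_⟩
      rw [gBH_one]
      have hc1 : c ≤ 2 := by linarith
      have h1 : a ^ (4/3:ℝ) ≤ a := rpow43_le ha ha1
      have h2 : (-b) ^ (4/3:ℝ) ≤ -b := rpow43_le (by linarith) (by linarith)
      have h3 : (c/2) ^ (4/3:ℝ) ≤ c/2 := rpow43_le hc2 (by linarith)
      linarith

lemma key1 (a b c : ℝ) (ha : 0 ≤ a) (hba : |b| ≤ a)
    (h : ∀ x ∈ Icc (-1:ℝ) 1, ∀ y ∈ Icc (-1:ℝ) 1, |a*x^2 + b*y^2 + c*x*y| ≤ 1) :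
    ∃ t ∈ Icc (1/2:ℝ) 1,
      |a| ^ (4/3:ℝ) + |b| ^ (4/3:ℝ) + 2 * |c/2| ^ (4/3:ℝ) ≤ gBH t := by
  rcases le_total 0 c with hc | hc
  · exact key0 a b c ha hc hba h
  · have h' : ∀ x ∈ Icc (-1:ℝ) 1, ∀ y ∈ Icc (-1:ℝ) 1,
        |a*x^2 + b*y^2 + (-c)*x*y| ≤ 1 := by
      intro x hx y hy
      have hy' : -y ∈ Icc (-1:ℝ) 1 := ⟨by linarith [hy.2], by linarith [hy.1]⟩
      have h0 := h x hx (-y) hy'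
      have e : a*x^2 + b*(-y)^2 + c*x*(-y) = a*x^2 + b*y^2 + (-c)*x*y := by ring
      rwa [e] at h0
    obtain ⟨t, ht, hF⟩ := key0 a b (-c) ha (by linarith) hba h'
    refine ⟨t, ht, ?_⟩
    rwa [neg_div, abs_neg] at hF

lemma key2 (a b c : ℝ) (hba : |b| ≤ |a|)
    (h : ∀ x ∈ Icc (-1:ℝ) 1, ∀ y ∈ Icc (-1:ℝ) 1, |a*x^2 + b*y^2 + c*x*y| ≤ 1) :
    ∃ t ∈ Icc (1/2:ℝ) 1,
      |a| ^ (4/3:ℝ) + |b| ^ (4/3:ℝ) + 2 * |c/2| ^ (4/3:ℝ) ≤ gBH t := by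
  rcases le_total 0 a with ha | ha
  · exact key1 a b c ha (by rwa [abs_of_nonneg ha] at hba) h
  · have h' : ∀ x ∈ Icc (-1:ℝ) 1, ∀ y ∈ Icc (-1:ℝ) 1,
        |(-a)*x^2 + (-b)*y^2 + (-c)*x*y| ≤ 1 := by
      intro x hx y hy
      have h0 := h x hx y hy
      have e : (-a)*x^2 + (-b)*y^2 + (-c)*x*y = -(a*x^2 + b*y^2 + c*x*y) := by ring
      rw [e, abs_neg]
      exact h0
    obtain ⟨t, ht, hF⟩ := key1 (-a) (-b) (-c) (by linarith)
      (by rw [abs_neg]; rwa [abs_of_nonpos ha] at hba) h'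
    refine ⟨t, ht, ?_⟩
    rwa [abs_neg, abs_neg, neg_div, abs_neg] at hF

lemma keyGen (a b c : ℝ)
    (h : ∀ x ∈ Icc (-1:ℝ) 1, ∀ y ∈ Icc (-1:ℝ) 1, |a*x^2 + b*y^2 + c*x*y| ≤ 1) :
    ∃ t ∈ Icc (1/2:ℝ) 1,
      |a| ^ (4/3:ℝ) + |b| ^ (4/3:ℝ) + 2 * |c/2| ^ (4/3:ℝ) ≤ gBH t := by
  rcases le_total |b| |a| with hba | hba
  · exact key2 a b c hba h
  · have h' : ∀ x ∈ Icc (-1:ℝ) 1, ∀ y ∈ Icc (-1:ℝ) 1,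
        |b*x^2 + a*y^2 + c*x*y| ≤ 1 := by
      intro x hx y hy
      have h0 := h y hy x hx
      have e : a*y^2 + b*x^2 + c*y*x = b*x^2 + a*y^2 + c*x*y := by ring
      rwa [e] at h0
    obtain ⟨t, ht, hF⟩ := key2 b a c hba h'
    exact ⟨t, ht, by linarith⟩

lemma fBH_continuous : Continuous fBH := by
  have c1 : ∀ q : ℝ, 0 ≤ q → Continuous fun x : ℝ => x ^ q := fun q hq =>
    continuous_iff_continuousAt.2 fun x => Real.continuousAt_rpow_const x q (Or.inr hq)
  have cg : Continuous gBH := by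
    unfold gBH
    exact (continuous_const.mul ((c1 (4/3) (by norm_num)).comp continuous_id)).add
      (continuous_const.mul ((c1 (2/3) (by norm_num)).comp
        (continuous_id.mul (continuous_const.sub continuous_id))))
  exact (c1 (3/4) (by norm_num)).comp cg

lemma bddAboveT : BddAbove (fBH '' Icc (1/2:ℝ) 1) :=
  IsCompact.bddAbove_image isCompact_Icc fBH_continuous.continuousOn

noncomputable def Lstar : ℝ := sSup (fBH '' Icc (1/2:ℝ) 1)

lemma fBH_le_Lstar {t : ℝ} (ht : t ∈ Icc (1/2:ℝ) 1) : fBH t ≤ Lstar :=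
  le_csSup bddAboveT (mem_image_of_mem _ ht)

lemma one_mem_Icc : (1:ℝ) ∈ Icc (1/2:ℝ) 1 := by constructor <;> norm_num

lemma Lstar_nonneg : 0 ≤ Lstar :=
  le_trans (Real.rpow_nonneg (gBH_nonneg one_mem_Icc) _) (fBH_le_Lstar one_mem_Icc)

lemma main_ub (a b c : ℝ) :
    (|a| ^ (4 / 3 : ℝ) + |b| ^ (4 / 3 : ℝ) + 2 * |c / 2| ^ (4 / 3 : ℝ)) ^ (3 / 4 : ℝ) ≤
      Lstar * sSup ((fun p : ℝ × ℝ => |a * p.1 ^ 2 + b * p.2 ^ 2 + c * p.1 * p.2|) ''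
        (Icc (-1 : ℝ) 1 ×ˢ Icc (-1 : ℝ) 1)) := by
  set Q := (fun p : ℝ × ℝ => |a * p.1 ^ 2 + b * p.2 ^ 2 + c * p.1 * p.2|) ''
      (Icc (-1 : ℝ) 1 ×ˢ Icc (-1 : ℝ) 1) with hQdef
  set N := sSup Q with hNdef
  have hmem1 : (1:ℝ) ∈ Icc (-1:ℝ) 1 := by constructor <;> norm_num
  have hmem0 : (0:ℝ) ∈ Icc (-1:ℝ) 1 := by constructor <;> norm_num
  have hQbd : BddAbove Q := by
    refine ⟨|a| + |b| + |c|, ?_⟩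
    rintro v ⟨⟨x, y⟩, ⟨hx, hy⟩, rfl⟩
    rw [mem_Icc] at hx hy
    have hx1 : |x| ≤ 1 := abs_le.2 hx
    have hy1 : |y| ≤ 1 := abs_le.2 hy
    calc |a * x ^ 2 + b * y ^ 2 + c * x * y|
        ≤ |a * x ^ 2| + |b * y ^ 2| + |c * x * y| := abs_add_three _ _ _
      _ = |a| * |x| ^ 2 + |b| * |y| ^ 2 + |c| * |x| * |y| := by
          rw [abs_mul, abs_mul, abs_mul, abs_mul, abs_pow, abs_pow]
      _ ≤ |a| + |b| + |c| := by
          have hx2 : |x|^2 ≤ 1 := by nlinarith [abs_nonneg x]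
          have hy2 : |y|^2 ≤ 1 := by nlinarith [abs_nonneg y]
          have t1 : |a| * |x|^2 ≤ |a| := mul_le_of_le_one_right (abs_nonneg a) hx2
          have t2 : |b| * |y|^2 ≤ |b| := mul_le_of_le_one_right (abs_nonneg b) hy2
          have t3 : |c| * |x| * |y| ≤ |c| := by
            have h0 : 0 ≤ |c| * |x| := mul_nonneg (abs_nonneg c) (abs_nonneg x)
            nlinarith [mul_le_of_le_one_right h0 hy1,
              mul_le_of_le_one_right (abs_nonneg c) hx1]
          linarith
  have hpt : ∀ x ∈ Icc (-1:ℝ) 1, ∀ y ∈ Icc (-1:ℝ) 1,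
      |a * x ^ 2 + b * y ^ 2 + c * x * y| ≤ N :=
    fun x hx y hy => le_csSup hQbd ⟨(x, y), ⟨hx, hy⟩, rfl⟩
  have hN0 : 0 ≤ N := le_trans (abs_nonneg _) (hpt 1 hmem1 0 hmem0)
  rcases hN0.eq_or_lt with hN | hN
  · -- N = 0 : all coefficients vanish
    have ha0 : a = 0 := by
      have := hpt 1 hmem1 0 hmem0
      have h1 : |a| ≤ N := by simpa using this
      have := abs_nonneg a
      linarith [le_abs_self a, neg_abs_le a]
    have hb0 : b = 0 := by
      have := hpt 0 hmem0 1 hmem1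
      have h1 : |b| ≤ N := by simpa using this
      linarith [le_abs_self b, neg_abs_le b]
    have hc0 : c = 0 := by
      have := hpt 1 hmem1 1 hmem1
      rw [ha0, hb0] at this
      have h1 : |c| ≤ N := by simpa using this
      linarith [le_abs_self c, neg_abs_le c]
    rw [ha0, hb0, hc0, ← hN]
    norm_num [Real.zero_rpow (by norm_num : (4/3:ℝ) ≠ 0),
      Real.zero_rpow (by norm_num : (3/4:ℝ) ≠ 0)]
  · -- N > 0 : rescale
    have h1 : ∀ x ∈ Icc (-1:ℝ) 1, ∀ y ∈ Icc (-1:ℝ) 1,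
        |(a/N)*x^2 + (b/N)*y^2 + (c/N)*x*y| ≤ 1 := by
      intro x hx y hy
      have e : (a/N)*x^2 + (b/N)*y^2 + (c/N)*x*y = (a*x^2 + b*y^2 + c*x*y)/N := by ring
      rw [e, abs_div, abs_of_pos hN, div_le_one hN]
      exact hpt x hx y hy
    obtain ⟨t, ht, hF⟩ := keyGen _ _ _ h1
    have hN43 : (0:ℝ) < N ^ (4/3:ℝ) := Real.rpow_pos_of_pos hN _
    have e1 : |a/N| ^ (4/3:ℝ) = |a| ^ (4/3:ℝ) / N ^ (4/3:ℝ) := by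
      rw [abs_div, abs_of_pos hN, Real.div_rpow (abs_nonneg a) hN0]
    have e2 : |b/N| ^ (4/3:ℝ) = |b| ^ (4/3:ℝ) / N ^ (4/3:ℝ) := by
      rw [abs_div, abs_of_pos hN, Real.div_rpow (abs_nonneg b) hN0]
    have e3 : |(c/N)/2| ^ (4/3:ℝ) = |c/2| ^ (4/3:ℝ) / N ^ (4/3:ℝ) := by
      have e : (c/N)/2 = (c/2)/N := by ring
      rw [e, abs_div, abs_of_pos hN, Real.div_rpow (abs_nonneg _) hN0]
    rw [e1, e2, e3] at hF
    have hF' : |a| ^ (4/3:ℝ) + |b| ^ (4/3:ℝ) + 2 * |c/2| ^ (4/3:ℝ) ≤ gBH t * N ^ (4/3:ℝ) := by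
      have hdiv : (|a| ^ (4/3:ℝ) + |b| ^ (4/3:ℝ) + 2 * |c/2| ^ (4/3:ℝ)) / N ^ (4/3:ℝ)
          ≤ gBH t := by
        rw [add_div, add_div, mul_div_assoc]
        exact hF
      exact (div_le_iff₀ hN43).mp hdiv
    have hFnn : (0:ℝ) ≤ |a| ^ (4/3:ℝ) + |b| ^ (4/3:ℝ) + 2 * |c/2| ^ (4/3:ℝ) := by positivity
    calc (|a| ^ (4/3:ℝ) + |b| ^ (4/3:ℝ) + 2 * |c/2| ^ (4/3:ℝ)) ^ (3/4:ℝ)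
        ≤ (gBH t * N ^ (4/3:ℝ)) ^ (3/4:ℝ) := Real.rpow_le_rpow hFnn hF' (by norm_num)
      _ = gBH t ^ (3/4:ℝ) * (N ^ (4/3:ℝ)) ^ (3/4:ℝ) :=
          Real.mul_rpow (gBH_nonneg ht) hN43.le
      _ = fBH t * N := by
          rw [← Real.rpow_mul hN0]
          norm_num [fBH]
      _ ≤ Lstar * N := mul_le_mul_of_nonneg_right (fBH_le_Lstar ht) hN0

lemma main_lb (L : ℝ) (hL0 : 0 ≤ L)
    (hL : ∀ a b c : ℝ,
        (|a| ^ (4 / 3 : ℝ) + |b| ^ (4 / 3 : ℝ) + 2 * |c / 2| ^ (4 / 3 : ℝ)) ^ (3 / 4 : ℝ) ≤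
          L * sSup ((fun p : ℝ × ℝ => |a * p.1 ^ 2 + b * p.2 ^ 2 + c * p.1 * p.2|) ''
            (Icc (-1 : ℝ) 1 ×ˢ Icc (-1 : ℝ) 1)))
    {t : ℝ} (ht : t ∈ Icc (1/2:ℝ) 1) : fBH t ≤ L := by
  obtain ⟨ht1, ht2⟩ := ht
  have ht0 : (0:ℝ) ≤ t := by linarith
  have ht0' : (0:ℝ) ≤ 1 - t := by linarith
  set u : ℝ := Real.sqrt t with hudef
  set v : ℝ := Real.sqrt (1 - t) with hvdef
  have hu : u ^ 2 = t := Real.sq_sqrt ht0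
  have hv : v ^ 2 = 1 - t := Real.sq_sqrt ht0'
  have hu0 : 0 ≤ u := Real.sqrt_nonneg _
  have hv0 : 0 ≤ v := Real.sqrt_nonneg _
  have key := hL t (-t) (2*(u*v))
  set Q := (fun p : ℝ × ℝ => |t * p.1 ^ 2 + (-t) * p.2 ^ 2 + 2*(u*v) * p.1 * p.2|) ''
      (Icc (-1 : ℝ) 1 ×ˢ Icc (-1 : ℝ) 1) with hQdef
  have hQne : Q.Nonempty := by
    refine ⟨_, ⟨((1:ℝ), (0:ℝ)), ⟨?_, ?_⟩, rfl⟩⟩ <;> constructor <;> norm_num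
  have hbd : ∀ w ∈ Q, w ≤ 1 := by
    rintro w ⟨⟨x, y⟩, ⟨hx, hy⟩, rfl⟩
    rw [mem_Icc] at hx hy
    have hx2 : x ^ 2 ≤ 1 := by nlinarith [hx.1, hx.2]
    have hy2 : y ^ 2 ≤ 1 := by nlinarith [hy.1, hy.2]
    rw [abs_le]
    constructor
    · nlinarith [sq_nonneg (u*x + v*y)]
    · nlinarith [sq_nonneg (v*x - u*y)]
  have hsup : sSup Q ≤ 1 := csSup_le hQne hbd
  have hRHS : L * sSup Q ≤ L := by
    have := mul_le_mul_of_nonneg_left hsup hL0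
    simpa using this
  have habs1 : |t| = t := abs_of_nonneg ht0
  have habs2 : |(-t)| = t := by rw [abs_neg, habs1]
  have hcv : |2*(u*v)/2| = u*v := by
    have e : 2*(u*v)/2 = u*v := by ring
    rw [e, abs_of_nonneg (mul_nonneg hu0 hv0)]
  have huv : (u*v) ^ (4/3:ℝ) = (t*(1-t)) ^ (2/3:ℝ) := by
    have e : u*v = (t*(1-t)) ^ ((1:ℝ)/2) := by
      rw [← Real.sqrt_eq_rpow, Real.sqrt_mul ht0]
    rw [e, ← Real.rpow_mul (mul_nonneg ht0 ht0')]
    norm_num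
  rw [habs1, habs2, hcv, huv] at key
  have e2 : t ^ (4/3:ℝ) + t ^ (4/3:ℝ) + 2 * (t*(1-t)) ^ (2/3:ℝ)
      = 2 * t ^ (4/3:ℝ) + 2 * (t*(1-t)) ^ (2/3:ℝ) := by ring
  rw [e2] at key
  exact le_trans key hRHS

/-- The best constant `L_{ℝ,2}(ℓ∞²)` in the Bohnenblust–Hille inequality for polars of
real 2-homogeneous polynomials on ℓ∞² equals
`sup { (2t^{4/3} + 2(t(1-t))^{2/3})^{3/4} : t ∈ [1/2,1] }`. -/
theorem L_R2_linf2_eq :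
    sInf {L : ℝ | 0 ≤ L ∧ ∀ a b c : ℝ,
        (|a| ^ (4 / 3 : ℝ) + |b| ^ (4 / 3 : ℝ) + 2 * |c / 2| ^ (4 / 3 : ℝ)) ^ (3 / 4 : ℝ) ≤
          L * sSup ((fun p : ℝ × ℝ => |a * p.1 ^ 2 + b * p.2 ^ 2 + c * p.1 * p.2|) ''
            (Icc (-1 : ℝ) 1 ×ˢ Icc (-1 : ℝ) 1))} =
      sSup ((fun t : ℝ =>
        (2 * t ^ (4 / 3 : ℝ) + 2 * (t * (1 - t)) ^ (2 / 3 : ℝ)) ^ (3 / 4 : ℝ)) ''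
        Icc (1 / 2 : ℝ) 1) := by
  have himg : ((fun t : ℝ =>
      (2 * t ^ (4 / 3 : ℝ) + 2 * (t * (1 - t)) ^ (2 / 3 : ℝ)) ^ (3 / 4 : ℝ)) ''
      Icc (1 / 2 : ℝ) 1) = fBH '' Icc (1/2:ℝ) 1 := rfl
  rw [himg]
  have hmem : Lstar ∈ {L : ℝ | 0 ≤ L ∧ ∀ a b c : ℝ,
      (|a| ^ (4 / 3 : ℝ) + |b| ^ (4 / 3 : ℝ) + 2 * |c / 2| ^ (4 / 3 : ℝ)) ^ (3 / 4 : ℝ) ≤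
        L * sSup ((fun p : ℝ × ℝ => |a * p.1 ^ 2 + b * p.2 ^ 2 + c * p.1 * p.2|) ''
          (Icc (-1 : ℝ) 1 ×ˢ Icc (-1 : ℝ) 1))} := ⟨Lstar_nonneg, main_ub⟩
  apply le_antisymm
  · exact csInf_le ⟨0, fun L hL => hL.1⟩ hmem
  · refine le_csInf ⟨Lstar, hmem⟩ ?_
    rintro L ⟨hL0, hL⟩
    refine csSup_le ⟨fBH 1, mem_image_of_mem _ one_mem_Icc⟩ ?_
    rintro w ⟨t, ht, rfl⟩
    exact main_lb L hL0 hL ht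
end

section
/- Every constant L ≥ 0 such that for every 2-homogeneous polynomial P(x,y) = ax² + by² + cxy with real coefficients one has (|a|^{4/3} + |b|^{4/3} + 2·|c/2|^{4/3})^{3/4} ≤ L · sup{|P(x,y)| : (x,y) ∈ [−1,1]²} satisfies L ≥ (4/5)·(2 + 2·(1/2)^{4/3})^{3/4} (≈ 1.728). In particular, for P(x,y) = x² − y² + xy one has sup{|P(x,y)| : (x,y) ∈ [−1,1]²} = 5/4. -/
open Set

/-- Any constant in the Bohnenblust–Hille inequality for polars of real 2-homogeneous
polynomials on ℓ∞² is at least `(4/5)·(2 + 2·(1/2)^{4/3})^{3/4} ≈ 1.728`; in particular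
the polynomial `x² - y² + xy` has sup norm `5/4` on `[-1,1]²`. -/
theorem L_R2_lower_bound :
    (∀ L : ℝ, 0 ≤ L →
      (∀ a b c : ℝ,
        (|a| ^ (4 / 3 : ℝ) + |b| ^ (4 / 3 : ℝ) + 2 * |c / 2| ^ (4 / 3 : ℝ)) ^ (3 / 4 : ℝ) ≤
          L * sSup ((fun p : ℝ × ℝ => |a * p.1 ^ 2 + b * p.2 ^ 2 + c * p.1 * p.2|) ''
            (Icc (-1 : ℝ) 1 ×ˢ Icc (-1 : ℝ) 1))) →
      (4 / 5 : ℝ) * (2 + 2 * (1 / 2 : ℝ) ^ (4 / 3 : ℝ)) ^ (3 / 4 : ℝ) ≤ L) ∧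
    sSup ((fun p : ℝ × ℝ => |p.1 ^ 2 - p.2 ^ 2 + p.1 * p.2|) ''
      (Icc (-1 : ℝ) 1 ×ˢ Icc (-1 : ℝ) 1)) = 5 / 4 := by
  have hsup : sSup ((fun p : ℝ × ℝ => |p.1 ^ 2 - p.2 ^ 2 + p.1 * p.2|) ''
      (Icc (-1 : ℝ) 1 ×ˢ Icc (-1 : ℝ) 1)) = 5 / 4 := by
    apply le_antisymm
    · apply Real.sSup_le
      · rintro z ⟨⟨x, y⟩, ⟨hx, hy⟩, rfl⟩
        simp only [mem_Icc] at hx hy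
        rw [abs_le]
        constructor <;>
          nlinarith [sq_nonneg (y - x / 2), sq_nonneg (x + y / 2), hx.1, hx.2, hy.1, hy.2,
            sq_nonneg x, sq_nonneg y]
      · norm_num
    · apply le_csSup
      · refine ⟨5 / 4, ?_⟩
        rintro z ⟨⟨x, y⟩, ⟨hx, hy⟩, rfl⟩
        simp only [mem_Icc] at hx hy
        rw [abs_le]
        constructor <;>
          nlinarith [sq_nonneg (y - x / 2), sq_nonneg (x + y / 2), hx.1, hx.2, hy.1, hy.2,
            sq_nonneg x, sq_nonneg y]
      · exact ⟨(1, 1 / 2), ⟨by norm_num [mem_Icc], by norm_num [mem_Icc]⟩, by norm_num⟩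
  refine ⟨?_, hsup⟩
  intro L hL hyp
  have h := hyp 1 (-1) 1
  have hfun : (fun p : ℝ × ℝ => |1 * p.1 ^ 2 + (-1) * p.2 ^ 2 + 1 * p.1 * p.2|) =
      (fun p : ℝ × ℝ => |p.1 ^ 2 - p.2 ^ 2 + p.1 * p.2|) := by
    funext p; congr 1; ring
  rw [hfun, hsup] at h
  have e1 : |(1 : ℝ)| = 1 := by norm_num
  have e2 : |(-1 : ℝ)| = 1 := by norm_num
  have e3 : |(1 : ℝ) / 2| = 1 / 2 := by norm_num
  rw [e1, e2, e3, Real.one_rpow] at h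
  have h2 : (2 + 2 * (1 / 2 : ℝ) ^ (4 / 3 : ℝ)) ^ (3 / 4 : ℝ) ≤ L * (5 / 4) := by
    convert h using 3; norm_num
  linarith
end

section
/- Let L* be the infimum of all constants L ≥ 0 such that for all real numbers a, b, c one has (|a|^{8/5} + |b|^{8/5} + 6·|c/6|^{8/5})^{5/8} ≤ L · sup{|a x⁴ + b y⁴ + c x²y²| : (x,y) ∈ [−1,1]²}. Then L* = (2 + 6·(1/2)^{8/5})^{5/8} (≈ 2.371), and this value is attained: for (a,b,c) = (1,1,−3) the left-hand side equals L* times the supremum. -/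
open Set

lemma bddAux (a b c : ℝ) : BddAbove ((fun p : ℝ × ℝ =>
    |a * p.1 ^ 4 + b * p.2 ^ 4 + c * p.1 ^ 2 * p.2 ^ 2|) ''
    (Icc (-1 : ℝ) 1 ×ˢ Icc (-1 : ℝ) 1)) := by
  refine ⟨|a| + |b| + |c|, ?_⟩
  rintro z ⟨⟨x, y⟩, ⟨hx, hy⟩, rfl⟩
  obtain ⟨hx1, hx2⟩ := hx
  obtain ⟨hy1, hy2⟩ := hy
  have hxa : |x| ≤ 1 := abs_le.2 ⟨hx1, hx2⟩
  have hya : |y| ≤ 1 := abs_le.2 ⟨hy1, hy2⟩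
  have h1 : |a * x ^ 4| ≤ |a| := by
    rw [abs_mul, abs_pow]
    exact mul_le_of_le_one_right (abs_nonneg a) (pow_le_one₀ (abs_nonneg x) hxa)
  have h2 : |b * y ^ 4| ≤ |b| := by
    rw [abs_mul, abs_pow]
    exact mul_le_of_le_one_right (abs_nonneg b) (pow_le_one₀ (abs_nonneg y) hya)
  have h3 : |c * x ^ 2 * y ^ 2| ≤ |c| := by
    rw [abs_mul, abs_mul, abs_pow, abs_pow]
    have hx' : |x| ^ 2 ≤ 1 := pow_le_one₀ (abs_nonneg x) hxa
    have hy' : |y| ^ 2 ≤ 1 := pow_le_one₀ (abs_nonneg y) hya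
    have hxy : |x| ^ 2 * |y| ^ 2 ≤ 1 := by nlinarith [sq_nonneg |x|, sq_nonneg |y|]
    nlinarith [abs_nonneg c, mul_le_mul_of_nonneg_left hxy (abs_nonneg c)]
  calc |a * x ^ 4 + b * y ^ 4 + c * x ^ 2 * y ^ 2|
      ≤ |a * x ^ 4 + b * y ^ 4| + |c * x ^ 2 * y ^ 2| := abs_add_le _ _
    _ ≤ |a * x ^ 4| + |b * y ^ 4| + |c * x ^ 2 * y ^ 2| := by
        linarith [abs_add_le (a * x ^ 4) (b * y ^ 4)]
    _ ≤ |a| + |b| + |c| := by linarith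

lemma ptLe (a b c : ℝ) {x y : ℝ} (hx : x ∈ Icc (-1 : ℝ) 1) (hy : y ∈ Icc (-1 : ℝ) 1) :
    |a * x ^ 4 + b * y ^ 4 + c * x ^ 2 * y ^ 2| ≤
      sSup ((fun p : ℝ × ℝ =>
        |a * p.1 ^ 4 + b * p.2 ^ 4 + c * p.1 ^ 2 * p.2 ^ 2|) ''
        (Icc (-1 : ℝ) 1 ×ˢ Icc (-1 : ℝ) 1)) :=
  le_csSup (bddAux a b c) ⟨(x, y), ⟨hx, hy⟩, rfl⟩

lemma sSupExtremal :
    sSup ((fun p : ℝ × ℝ =>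
        |1 * p.1 ^ 4 + 1 * p.2 ^ 4 + (-3) * p.1 ^ 2 * p.2 ^ 2|) ''
      (Icc (-1 : ℝ) 1 ×ˢ Icc (-1 : ℝ) 1)) = 1 := by
  apply le_antisymm
  · apply csSup_le
    · exact ⟨_, ⟨(1, 0), ⟨by norm_num, by norm_num⟩, rfl⟩⟩
    · rintro z ⟨⟨x, y⟩, ⟨hx, hy⟩, rfl⟩
      obtain ⟨hx1, hx2⟩ := hx
      obtain ⟨hy1, hy2⟩ := hy
      have hx2' : x ^ 2 ≤ 1 := by nlinarith
      have hy2' : y ^ 2 ≤ 1 := by nlinarith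
      rw [abs_le]
      constructor
      · nlinarith [sq_nonneg (x ^ 2 - y ^ 2), sq_nonneg (x * y), sq_nonneg x, sq_nonneg y,
          mul_nonneg (sq_nonneg x) (sq_nonneg y),
          mul_nonneg (sub_nonneg.2 hx2') (sub_nonneg.2 hy2')]
      · nlinarith [sq_nonneg (x ^ 2 - y ^ 2), sq_nonneg (x * y), sq_nonneg x, sq_nonneg y,
          mul_nonneg (sq_nonneg x) (sq_nonneg y),
          mul_nonneg (sub_nonneg.2 hx2') (sub_nonneg.2 hy2')]
  · refine le_csSup (bddAux 1 1 (-3)) ⟨(1, 0), ⟨by norm_num, by norm_num⟩, by norm_num⟩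

lemma keyIneq (a b c S : ℝ) (hS : 0 ≤ S) (ha : |a| ≤ S) (hb : |b| ≤ S)
    (habc : |a + b + c| ≤ S) :
    (|a| ^ (8 / 5 : ℝ) + |b| ^ (8 / 5 : ℝ) + 6 * |c / 6| ^ (8 / 5 : ℝ)) ^ (5 / 8 : ℝ) ≤
      (2 + 6 * (1 / 2 : ℝ) ^ (8 / 5 : ℝ)) ^ (5 / 8 : ℝ) * S := by
  have hc : |c| ≤ 3 * S := by
    rw [abs_le] at ha hb habc ⊢
    constructor <;> linarith
  have hc6 : |c / 6| ≤ S / 2 := by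
    rw [abs_div, abs_of_nonneg (by norm_num : (0:ℝ) ≤ 6)]
    linarith
  have e1 : |a| ^ (8 / 5 : ℝ) ≤ S ^ (8 / 5 : ℝ) :=
    Real.rpow_le_rpow (abs_nonneg a) ha (by norm_num)
  have e2 : |b| ^ (8 / 5 : ℝ) ≤ S ^ (8 / 5 : ℝ) :=
    Real.rpow_le_rpow (abs_nonneg b) hb (by norm_num)
  have e3 : |c / 6| ^ (8 / 5 : ℝ) ≤ (1 / 2 : ℝ) ^ (8 / 5 : ℝ) * S ^ (8 / 5 : ℝ) := by
    have := Real.rpow_le_rpow (abs_nonneg (c / 6)) hc6 (by norm_num : (0:ℝ) ≤ 8 / 5)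
    rwa [show S / 2 = (1 / 2) * S by ring,
      Real.mul_rpow (by norm_num) hS] at this
  have hsum : |a| ^ (8 / 5 : ℝ) + |b| ^ (8 / 5 : ℝ) + 6 * |c / 6| ^ (8 / 5 : ℝ) ≤
      (2 + 6 * (1 / 2 : ℝ) ^ (8 / 5 : ℝ)) * S ^ (8 / 5 : ℝ) := by
    nlinarith [e1, e2, e3]
  calc (|a| ^ (8 / 5 : ℝ) + |b| ^ (8 / 5 : ℝ) + 6 * |c / 6| ^ (8 / 5 : ℝ)) ^ (5 / 8 : ℝ)
      ≤ ((2 + 6 * (1 / 2 : ℝ) ^ (8 / 5 : ℝ)) * S ^ (8 / 5 : ℝ)) ^ (5 / 8 : ℝ) :=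
        Real.rpow_le_rpow (by positivity) hsum (by norm_num)
    _ = (2 + 6 * (1 / 2 : ℝ) ^ (8 / 5 : ℝ)) ^ (5 / 8 : ℝ) * (S ^ (8 / 5 : ℝ)) ^ (5 / 8 : ℝ) :=
        Real.mul_rpow (by positivity) (Real.rpow_nonneg hS _)
    _ = (2 + 6 * (1 / 2 : ℝ) ^ (8 / 5 : ℝ)) ^ (5 / 8 : ℝ) * S := by
        rw [← Real.rpow_mul hS]
        norm_num

/-- The best constant in the Bohnenblust–Hille inequality for polars on the subspace
`E = {a x⁴ + b y⁴ + c x²y²}` of 4-homogeneous polynomials on ℓ∞² equals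
`(2 + 6·(1/2)^{8/5})^{5/8} ≈ 2.371`, attained at `(a,b,c) = (1,1,-3)`. -/
theorem L_R4_on_E_eq :
    sInf {L : ℝ | 0 ≤ L ∧ ∀ a b c : ℝ,
        (|a| ^ (8 / 5 : ℝ) + |b| ^ (8 / 5 : ℝ) + 6 * |c / 6| ^ (8 / 5 : ℝ)) ^ (5 / 8 : ℝ) ≤
          L * sSup ((fun p : ℝ × ℝ =>
              |a * p.1 ^ 4 + b * p.2 ^ 4 + c * p.1 ^ 2 * p.2 ^ 2|) ''
            (Icc (-1 : ℝ) 1 ×ˢ Icc (-1 : ℝ) 1))} =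
      (2 + 6 * (1 / 2 : ℝ) ^ (8 / 5 : ℝ)) ^ (5 / 8 : ℝ) ∧
    (|(1 : ℝ)| ^ (8 / 5 : ℝ) + |(1 : ℝ)| ^ (8 / 5 : ℝ) +
        6 * |(-3 : ℝ) / 6| ^ (8 / 5 : ℝ)) ^ (5 / 8 : ℝ) =
      (2 + 6 * (1 / 2 : ℝ) ^ (8 / 5 : ℝ)) ^ (5 / 8 : ℝ) *
        sSup ((fun p : ℝ × ℝ =>
            |1 * p.1 ^ 4 + 1 * p.2 ^ 4 + (-3) * p.1 ^ 2 * p.2 ^ 2|) ''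
          (Icc (-1 : ℝ) 1 ×ˢ Icc (-1 : ℝ) 1)) := by
  have h10 : (1 : ℝ) ∈ Icc (-1 : ℝ) 1 := by norm_num
  have h00 : (0 : ℝ) ∈ Icc (-1 : ℝ) 1 := by norm_num
  have hCmem : (2 + 6 * (1 / 2 : ℝ) ^ (8 / 5 : ℝ)) ^ (5 / 8 : ℝ) ∈
      {L : ℝ | 0 ≤ L ∧ ∀ a b c : ℝ,
        (|a| ^ (8 / 5 : ℝ) + |b| ^ (8 / 5 : ℝ) + 6 * |c / 6| ^ (8 / 5 : ℝ)) ^ (5 / 8 : ℝ) ≤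
          L * sSup ((fun p : ℝ × ℝ =>
              |a * p.1 ^ 4 + b * p.2 ^ 4 + c * p.1 ^ 2 * p.2 ^ 2|) ''
            (Icc (-1 : ℝ) 1 ×ˢ Icc (-1 : ℝ) 1))} := by
    refine ⟨by positivity, fun a b c => ?_⟩
    have ha : |a| ≤ sSup ((fun p : ℝ × ℝ =>
        |a * p.1 ^ 4 + b * p.2 ^ 4 + c * p.1 ^ 2 * p.2 ^ 2|) ''
        (Icc (-1 : ℝ) 1 ×ˢ Icc (-1 : ℝ) 1)) := by
      simpa using ptLe a b c h10 h00
    have hb : |b| ≤ sSup ((fun p : ℝ × ℝ =>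
        |a * p.1 ^ 4 + b * p.2 ^ 4 + c * p.1 ^ 2 * p.2 ^ 2|) ''
        (Icc (-1 : ℝ) 1 ×ˢ Icc (-1 : ℝ) 1)) := by
      simpa using ptLe a b c h00 h10
    have habc : |a + b + c| ≤ sSup ((fun p : ℝ × ℝ =>
        |a * p.1 ^ 4 + b * p.2 ^ 4 + c * p.1 ^ 2 * p.2 ^ 2|) ''
        (Icc (-1 : ℝ) 1 ×ˢ Icc (-1 : ℝ) 1)) := by
      simpa using ptLe a b c h10 h10
    exact keyIneq a b c _ ((abs_nonneg a).trans ha) ha hb habc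
  constructor
  · apply le_antisymm
    · exact csInf_le ⟨0, fun L hL => hL.1⟩ hCmem
    · refine le_csInf ⟨_, hCmem⟩ (fun L hL => ?_)
      have h := hL.2 1 1 (-3)
      rw [sSupExtremal, mul_one] at h
      have heq : (|(1 : ℝ)| ^ (8 / 5 : ℝ) + |(1 : ℝ)| ^ (8 / 5 : ℝ) +
          6 * |(-3 : ℝ) / 6| ^ (8 / 5 : ℝ)) =
          (2 + 6 * (1 / 2 : ℝ) ^ (8 / 5 : ℝ)) := by
        rw [abs_one, Real.one_rpow, show |(-3 : ℝ) / 6| = 1 / 2 by norm_num [abs_of_nonpos]]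
        ring
      rwa [heq] at h
  · rw [sSupExtremal, mul_one]
    rw [abs_one, Real.one_rpow, show |(-3 : ℝ) / 6| = 1 / 2 by norm_num [abs_of_nonpos]]
    norm_num
end

section
/- Let k ≥ 1 be an integer and t ∈ [1/2, 1]. Define A_j = Σ_{ℓ = max(0, j−k)}^{⌊j/2⌋} (k!/(ℓ!·(j−2ℓ)!·(k−j+ℓ)!)) · t^ℓ (−t)^{k−j+ℓ} (2√(t(1−t)))^{j−2ℓ} for j = 0, …, 2k (so A_j is the coefficient of x^j y^{2k−j} in (t x² − t y² + 2√(t(1−t)) xy)^k). Then every constant L ≥ 0 such that for every 2k-homogeneous polynomial P(x,y) = Σ_{j=0}^{2k} c_j x^j y^{2k−j} with real coefficients one has (Σ_{j=0}^{2k} binom(2k,j) · |c_j / binom(2k,j)|^{4k/(2k+1)})^{(2k+1)/(4k)} ≤ L · sup{|P(x,y)| : (x,y) ∈ [−1,1]²} satisfies L ≥ (Σ_{j=0}^{2k} binom(2k,j) · |A_j / binom(2k,j)|^{4k/(2k+1)})^{(2k+1)/(4k)}. -/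
open Finset Set

lemma expand_sum (k : ℕ) (t s x y : ℝ) :
    ∑ j ∈ Finset.range (2 * k + 1),
      (∑ ℓ ∈ Finset.Icc (j - k) (j / 2),
        ((k.factorial : ℝ) /
          ((ℓ.factorial : ℝ) * ((j - 2 * ℓ).factorial : ℝ) * ((k + ℓ - j).factorial : ℝ))) *
          t ^ ℓ * (-t) ^ (k + ℓ - j) * s ^ (j - 2 * ℓ)) * x ^ j * y ^ (2 * k - j)
    = ((t * x ^ 2 + (-t) * y ^ 2) + s * (x * y)) ^ k := by
  rw [add_pow]
  have hR : ∀ m ∈ Finset.range (k + 1),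
      (t * x ^ 2 + (-t) * y ^ 2) ^ m * (s * (x * y)) ^ (k - m) * ((k.choose m : ℝ)) =
      ∑ ℓ ∈ Finset.range (m + 1),
        (t * x ^ 2) ^ ℓ * ((-t) * y ^ 2) ^ (m - ℓ) * (m.choose ℓ : ℝ) *
          (s * (x * y)) ^ (k - m) * (k.choose m : ℝ) := by
    intro m _
    rw [add_pow, Finset.sum_mul, Finset.sum_mul]
  rw [Finset.sum_congr rfl hR]
  simp only [Finset.sum_mul]
  rw [Finset.sum_sigma', Finset.sum_sigma']
  apply Finset.sum_nbij' (i := fun p => ⟨k + 2 * p.2 - p.1, p.2⟩)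
    (j := fun p => ⟨2 * p.2 + (k - p.1), p.2⟩)
  · rintro ⟨j, ℓ⟩ h
    simp only [Finset.mem_sigma, Finset.mem_range, Finset.mem_Icc] at h ⊢
    omega
  · rintro ⟨m, ℓ⟩ h
    simp only [Finset.mem_sigma, Finset.mem_range, Finset.mem_Icc] at h ⊢
    omega
  · rintro ⟨j, ℓ⟩ h
    simp only [Finset.mem_sigma, Finset.mem_range, Finset.mem_Icc] at h
    simp only [show 2 * ℓ + (k - (k + 2 * ℓ - j)) = j from by omega]
  · rintro ⟨m, ℓ⟩ h
    simp only [Finset.mem_sigma, Finset.mem_range, Finset.mem_Icc] at h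
    simp only [show k + 2 * ℓ - (2 * ℓ + (k - m)) = m from by omega]
  · rintro ⟨j, ℓ⟩ h
    simp only [Finset.mem_sigma, Finset.mem_range, Finset.mem_Icc] at h
    obtain ⟨hj, hl1, hl2⟩ := h
    obtain ⟨b, hb⟩ : ∃ b, j = 2 * ℓ + b := ⟨j - 2 * ℓ, by omega⟩
    obtain ⟨c, hc⟩ : ∃ c, k = ℓ + b + c := ⟨k + ℓ - j, by omega⟩
    subst hb hc
    have e1 : 2 * ℓ + b - 2 * ℓ = b := by omega
    have e2 : (ℓ + b + c) + ℓ - (2 * ℓ + b) = c := by omega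
    have e3 : (ℓ + b + c) + 2 * ℓ - (2 * ℓ + b) = ℓ + c := by omega
    have e4 : 2 * (ℓ + b + c) - (2 * ℓ + b) = b + 2 * c := by omega
    have e5 : ℓ + c - ℓ = c := by omega
    have e6 : (ℓ + b + c) - (ℓ + c) = b := by omega
    rw [e1, e2, e3, e4, e5, e6]
    rw [Nat.cast_choose ℝ (by omega : ℓ ≤ ℓ + c),
      Nat.cast_choose ℝ (by omega : ℓ + c ≤ ℓ + b + c), e5, e6]
    have f1 : (ℓ.factorial : ℝ) ≠ 0 := Nat.cast_ne_zero.2 (Nat.factorial_ne_zero ℓ)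
    have f2 : (b.factorial : ℝ) ≠ 0 := Nat.cast_ne_zero.2 (Nat.factorial_ne_zero b)
    have f3 : (c.factorial : ℝ) ≠ 0 := Nat.cast_ne_zero.2 (Nat.factorial_ne_zero c)
    have f4 : ((ℓ + c).factorial : ℝ) ≠ 0 := Nat.cast_ne_zero.2 (Nat.factorial_ne_zero _)
    field_simp
    ring




/-- Lower bound for the constant `L_{ℝ,2k}` in the Bohnenblust–Hille inequality for
polars of 2k-homogeneous polynomials on ℓ∞², obtained from the polynomial
`(t x² - t y² + 2√(t(1-t)) xy)^k` (which has sup norm 1 on `[-1,1]²`). -/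
theorem L_R_even_lower_bound (k : ℕ) (hk : 1 ≤ k) (t : ℝ) (ht : t ∈ Set.Icc (1 / 2 : ℝ) 1)
    (A : ℕ → ℝ)
    (hA : ∀ j, A j =
      ∑ ℓ ∈ Finset.Icc (j - k) (j / 2),
        ((k.factorial : ℝ) /
          ((ℓ.factorial : ℝ) * ((j - 2 * ℓ).factorial : ℝ) * ((k + ℓ - j).factorial : ℝ))) *
          t ^ ℓ * (-t) ^ (k + ℓ - j) * (2 * Real.sqrt (t * (1 - t))) ^ (j - 2 * ℓ))
    (L : ℝ) (hL0 : 0 ≤ L)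
    (hL : ∀ c : ℕ → ℝ,
      (∑ j ∈ Finset.range (2 * k + 1),
          ((2 * k).choose j : ℝ) *
            |c j / ((2 * k).choose j : ℝ)| ^ ((4 * k : ℝ) / (2 * k + 1 : ℝ)))
          ^ ((2 * k + 1 : ℝ) / (4 * k : ℝ)) ≤
        L * sSup ((fun p : ℝ × ℝ =>
            |∑ j ∈ Finset.range (2 * k + 1), c j * p.1 ^ j * p.2 ^ (2 * k - j)|) ''
          (Icc (-1 : ℝ) 1 ×ˢ Icc (-1 : ℝ) 1))) :
    (∑ j ∈ Finset.range (2 * k + 1),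
        ((2 * k).choose j : ℝ) *
          |A j / ((2 * k).choose j : ℝ)| ^ ((4 * k : ℝ) / (2 * k + 1 : ℝ)))
        ^ ((2 * k + 1 : ℝ) / (4 * k : ℝ)) ≤ L := by
  obtain ⟨ht1, ht2⟩ := ht
  set s : ℝ := 2 * Real.sqrt (t * (1 - t)) with hs_def
  have hs0 : 0 ≤ s := by positivity
  have hs2 : s ^ 2 = 4 * t * (1 - t) := by
    rw [hs_def, mul_pow, Real.sq_sqrt (by nlinarith : (0:ℝ) ≤ t * (1 - t))]
    ring
  have hbound : ∀ p : ℝ × ℝ, p ∈ Icc (-1 : ℝ) 1 ×ˢ Icc (-1 : ℝ) 1 →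
      |t * p.1 ^ 2 + (-t) * p.2 ^ 2 + s * (p.1 * p.2)| ≤ 1 := by
    rintro ⟨x, y⟩ ⟨⟨hx1, hx2⟩, hy1, hy2⟩
    dsimp only at *
    have h0t : (0:ℝ) ≤ t := by linarith
    have h1x : (0:ℝ) ≤ 1 - x ^ 2 := by nlinarith
    have h1y : (0:ℝ) ≤ 1 - y ^ 2 := by nlinarith
    have hsx : s ^ 2 * x ^ 2 = (4 * t - 4 * t ^ 2) * x ^ 2 := by rw [hs2]; ring
    have hsy : s ^ 2 * y ^ 2 = (4 * t - 4 * t ^ 2) * y ^ 2 := by rw [hs2]; ring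
    have h1 : 0 ≤ 4 * t * (1 - (t * x ^ 2 + (-t) * y ^ 2 + s * (x * y))) := by
      nlinarith [sq_nonneg (2 * t * y - s * x), hsx, mul_nonneg h0t h1x]
    have h2 : 0 ≤ 4 * t * (1 + (t * x ^ 2 + (-t) * y ^ 2 + s * (x * y))) := by
      nlinarith [sq_nonneg (2 * t * x + s * y), hsy, mul_nonneg h0t h1y]
    rw [abs_le]
    constructor <;> nlinarith
  have hsup : sSup ((fun p : ℝ × ℝ =>
      |∑ j ∈ Finset.range (2 * k + 1), A j * p.1 ^ j * p.2 ^ (2 * k - j)|) ''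
      (Icc (-1 : ℝ) 1 ×ˢ Icc (-1 : ℝ) 1)) ≤ 1 := by
    apply Real.sSup_le _ zero_le_one
    rintro z ⟨p, hp, rfl⟩
    dsimp only
    have hrw : ∑ j ∈ Finset.range (2 * k + 1), A j * p.1 ^ j * p.2 ^ (2 * k - j)
        = ((t * p.1 ^ 2 + (-t) * p.2 ^ 2) + s * (p.1 * p.2)) ^ k := by
      rw [← expand_sum k t s p.1 p.2]
      exact Finset.sum_congr rfl fun j _ => by rw [hA j]
    rw [hrw, abs_pow]
    calc |t * p.1 ^ 2 + (-t) * p.2 ^ 2 + s * (p.1 * p.2)| ^ k ≤ 1 ^ k :=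
          pow_le_pow_left₀ (abs_nonneg _) (hbound p hp) k
      _ = 1 := one_pow k
  calc (∑ j ∈ Finset.range (2 * k + 1),
        ((2 * k).choose j : ℝ) *
          |A j / ((2 * k).choose j : ℝ)| ^ ((4 * k : ℝ) / (2 * k + 1 : ℝ)))
        ^ ((2 * k + 1 : ℝ) / (4 * k : ℝ))
      ≤ L * sSup ((fun p : ℝ × ℝ =>
            |∑ j ∈ Finset.range (2 * k + 1), A j * p.1 ^ j * p.2 ^ (2 * k - j)|) ''
          (Icc (-1 : ℝ) 1 ×ˢ Icc (-1 : ℝ) 1)) := hL A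
    _ ≤ L * 1 := mul_le_mul_of_nonneg_left hsup hL0
    _ = L := mul_one L
end

section
/- For every t ∈ [1/2, 1], sup{ |t x² − t y² + 2√(t(1−t)) xy| : (x,y) ∈ [−1,1]² } = 1. -/
open Set

/-- For every `t ∈ [1/2,1]`, the quadratic `t x² - t y² + 2√(t(1-t)) xy` has sup norm
exactly 1 on `[-1,1]²`. -/
theorem sup_norm_extreme_quadratic (t : ℝ) (ht : t ∈ Set.Icc (1 / 2 : ℝ) 1) :
    sSup ((fun p : ℝ × ℝ =>
        |t * p.1 ^ 2 - t * p.2 ^ 2 + 2 * Real.sqrt (t * (1 - t)) * p.1 * p.2|) ''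
      (Icc (-1 : ℝ) 1 ×ˢ Icc (-1 : ℝ) 1)) = 1 := by
  obtain ⟨ht1, ht2⟩ := ht
  have ht0 : (0:ℝ) ≤ t := by linarith
  have h1t : (0:ℝ) ≤ 1 - t := by linarith
  set a := Real.sqrt t with ha_def
  set b := Real.sqrt (1 - t) with hb_def
  have ha : a ^ 2 = t := Real.sq_sqrt ht0
  have hb : b ^ 2 = 1 - t := Real.sq_sqrt h1t
  have ha0 : 0 ≤ a := Real.sqrt_nonneg _
  have hb0 : 0 ≤ b := Real.sqrt_nonneg _
  have hapos : 0 < a := Real.sqrt_pos.mpr (by linarith)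
  have hs : Real.sqrt (t * (1 - t)) = a * b := Real.sqrt_mul ht0 _
  have hba : b ≤ a := Real.sqrt_le_sqrt (by linarith)
  -- upper bound
  have hub : ∀ z ∈ ((fun p : ℝ × ℝ =>
        |t * p.1 ^ 2 - t * p.2 ^ 2 + 2 * Real.sqrt (t * (1 - t)) * p.1 * p.2|) ''
      (Icc (-1 : ℝ) 1 ×ˢ Icc (-1 : ℝ) 1)), z ≤ 1 := by
    rintro z ⟨⟨x, y⟩, ⟨⟨hx1, hx2⟩, ⟨hy1, hy2⟩⟩, rfl⟩
    simp only [hs]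
    rw [abs_le]
    have hx2' : x ^ 2 ≤ 1 := by nlinarith
    have hy2' : y ^ 2 ≤ 1 := by nlinarith
    have hid : t * x ^ 2 - t * y ^ 2 + 2 * (a * b) * x * y
        = (a * x + b * y) ^ 2 - y ^ 2 := by nlinarith [sq_nonneg (a*x + b*y)]
    constructor
    · nlinarith [sq_nonneg (a * x + b * y)]
    · nlinarith [sq_nonneg (b * x - a * y)]
  refine le_antisymm (Real.sSup_le hub zero_le_one) ?_
  apply le_csSup ⟨1, hub⟩
  refine ⟨(1, b / a), ⟨⟨by norm_num, le_refl 1⟩,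
    ⟨le_trans (by norm_num) (div_nonneg hb0 hapos.le), by
      rw [div_le_one hapos]; exact hba⟩⟩, ?_⟩
  have hy2 : t * (b / a) ^ 2 = 1 - t := by
    field_simp
    nlinarith
  have hxy : a * b * (b / a) = 1 - t := by
    field_simp
    nlinarith
  simp only [hs]
  rw [abs_eq (by norm_num)]
  left
  nlinarith
end

section
/- Let k ≥ 1 be an integer and define B_j = Σ_{ℓ = max(0, j−k)}^{⌊j/2⌋} (k!·(−3)^{j−2ℓ})/(ℓ!·(j−2ℓ)!·(k−j+ℓ)!) for j = 0, …, 2k (so B_j is the coefficient of x^{2j} y^{4k−2j} in (x⁴ + y⁴ − 3x²y²)^k). Then every constant L ≥ 0 such that for every 4k-homogeneous polynomial P(x,y) = Σ_{|α|=4k} a_α x^{α₁} y^{α₂} with real coefficients one has (Σ_{|α|=4k} binom(4k,α) · |a_α / binom(4k,α)|^{8k/(4k+1)})^{(4k+1)/(8k)} ≤ L · sup{|P(x,y)| : (x,y) ∈ [−1,1]²} satisfies L ≥ (Σ_{j=0}^{2k} binom(4k,2j) · |B_j / binom(4k,2j)|^{8k/(4k+1)})^{(4k+1)/(8k)}. 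-/
open Finset Set

set_option maxHeartbeats 800000

private lemma sum_range_even (n : ℕ) (f : ℕ → ℝ) (hf : ∀ j, j % 2 = 1 → f j = 0) :
    ∑ j ∈ Finset.range (2 * n + 1), f j = ∑ i ∈ Finset.range (n + 1), f (2 * i) := by
  rw [← Finset.sum_filter_add_sum_filter_not (Finset.range (2 * n + 1)) (fun j => j % 2 = 0)]
  have h2 : ∑ j ∈ (Finset.range (2*n+1)).filter (fun j => ¬ j % 2 = 0), f j = 0 := by
    apply Finset.sum_eq_zero
    intro j hj
    simp only [Finset.mem_filter] at hj
    exact hf j (by omega)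
  rw [h2, add_zero]
  apply Finset.sum_nbij' (i := fun j => j / 2) (j := fun i => 2 * i)
  · intro a ha; simp only [Finset.mem_filter, Finset.mem_range] at ha ⊢; omega
  · intro a ha; simp only [Finset.mem_filter, Finset.mem_range] at ha ⊢; omega
  · intro a ha; simp only [Finset.mem_filter, Finset.mem_range] at ha; omega
  · intro a ha; omega
  · intro a ha; simp only [Finset.mem_filter, Finset.mem_range] at ha
    congr 1; omega

private lemma coeff_eq (k i l : ℕ) (h : i + l ≤ k) :
    (k.factorial : ℝ) / ((l.factorial : ℝ) * (i.factorial : ℝ) * ((k - i - l).factorial : ℝ))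
      = ((k - i).choose l : ℝ) * (k.choose i : ℝ) := by
  have h1 : i ≤ k := le_trans (Nat.le_add_right _ _) h
  have h2 : l ≤ k - i := by omega
  have e1 : (k.choose i) * i.factorial * (k - i).factorial = k.factorial :=
    Nat.choose_mul_factorial_mul_factorial h1
  have e2 : ((k - i).choose l) * l.factorial * (k - i - l).factorial = (k-i).factorial :=
    Nat.choose_mul_factorial_mul_factorial h2
  have e1' : (k.factorial : ℝ) = (k.choose i : ℝ) * i.factorial * (k - i).factorial := by
    exact_mod_cast e1.symm
  have e2' : ((k-i).factorial : ℝ) = ((k - i).choose l : ℝ) * l.factorial * (k - i - l).factorial := by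
    exact_mod_cast e2.symm
  have f1 : (l.factorial : ℝ) ≠ 0 := Nat.cast_ne_zero.2 (Nat.factorial_ne_zero _)
  have f2 : (i.factorial : ℝ) ≠ 0 := Nat.cast_ne_zero.2 (Nat.factorial_ne_zero _)
  have f3 : ((k - i - l).factorial : ℝ) ≠ 0 := Nat.cast_ne_zero.2 (Nat.factorial_ne_zero _)
  rw [e1', e2']
  field_simp

private lemma poly_key (k : ℕ) (B : ℕ → ℝ)
    (hB : ∀ j, B j =
      ∑ ℓ ∈ Finset.Icc (j - k) (j / 2),
        ((k.factorial : ℝ) * (-3 : ℝ) ^ (j - 2 * ℓ)) /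
          ((ℓ.factorial : ℝ) * ((j - 2 * ℓ).factorial : ℝ) * ((k + ℓ - j).factorial : ℝ)))
    (x y : ℝ) :
    ∑ j ∈ Finset.range (2 * k + 1), B j * x ^ (2 * j) * y ^ (4 * k - 2 * j)
      = (x ^ 4 + y ^ 4 - 3 * x ^ 2 * y ^ 2) ^ k := by
  have hrhs : (x ^ 4 + y ^ 4 - 3 * x ^ 2 * y ^ 2) ^ k
      = ((-3 * x ^ 2 * y ^ 2) + (x ^ 4 + y ^ 4)) ^ k := by ring_nf
  rw [hrhs, add_pow]
  have hexp : ∀ i ∈ Finset.range (k + 1),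
      (-3 * x ^ 2 * y ^ 2) ^ i * (x ^ 4 + y ^ 4) ^ (k - i) * (k.choose i : ℝ)
      = ∑ l ∈ Finset.range (k - i + 1),
          (-3 * x ^ 2 * y ^ 2) ^ i * ((x ^ 4) ^ l * (y ^ 4) ^ (k - i - l) *
            ((k - i).choose l : ℝ)) * (k.choose i : ℝ) := by
    intro i _
    rw [add_pow, Finset.mul_sum, Finset.sum_mul]
  rw [Finset.sum_congr rfl hexp]
  simp_rw [hB, Finset.sum_mul]
  rw [Finset.sum_sigma', Finset.sum_sigma']
  apply Finset.sum_nbij' (i := fun p => (⟨p.1 - 2 * p.2, p.2⟩ : Σ _ : ℕ, ℕ))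
    (j := fun p => (⟨p.1 + 2 * p.2, p.2⟩ : Σ _ : ℕ, ℕ))
  · rintro ⟨j, l⟩ h
    simp only [Finset.mem_sigma, Finset.mem_range, Finset.mem_Icc] at h ⊢
    omega
  · rintro ⟨i, l⟩ h
    simp only [Finset.mem_sigma, Finset.mem_range, Finset.mem_Icc] at h ⊢
    omega
  · rintro ⟨j, l⟩ h
    simp only [Finset.mem_sigma, Finset.mem_range, Finset.mem_Icc] at h
    simp only [Sigma.mk.inj_iff]
    constructor
    · omega
    · rfl
  · rintro ⟨i, l⟩ h
    simp only [Sigma.mk.inj_iff]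
    constructor
    · omega
    · rfl
  · rintro ⟨j, l⟩ h
    simp only [Finset.mem_sigma, Finset.mem_range, Finset.mem_Icc] at h
    obtain ⟨hj, hl1, hl2⟩ := h
    -- let i = j - 2l
    set i := j - 2 * l with hi
    have hil : i + l ≤ k := by omega
    have hji : j = i + 2 * l := by omega
    have hcoef := coeff_eq k i l hil
    have hkl : k + l - j = k - i - l := by omega
    dsimp only
    rw [hkl]
    have hxy1 : x ^ (2 * j) = x ^ (2 * i) * (x ^ 4) ^ l := by
      rw [← pow_mul, ← pow_add]; congr 1; omega
    have hxy2 : y ^ (4 * k - 2 * j) = y ^ (2 * i) * (y ^ 4) ^ (k - i - l) := by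
      rw [← pow_mul, ← pow_add]; congr 1; omega
    have hneg : (-3 * x ^ 2 * y ^ 2) ^ i = (-3 : ℝ) ^ i * x ^ (2 * i) * y ^ (2 * i) := by
      rw [mul_pow, mul_pow, ← pow_mul, ← pow_mul]
    rw [hxy1, hxy2, hneg]
    have : (k.factorial : ℝ) * (-3 : ℝ) ^ i /
        ((l.factorial : ℝ) * (i.factorial : ℝ) * ((k - i - l).factorial : ℝ))
        = (-3 : ℝ) ^ i * (((k - i).choose l : ℝ) * (k.choose i : ℝ)) := by
      rw [mul_comm ((k.factorial : ℝ)) _, mul_div_assoc, hcoef]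
    rw [this]
    ring

/-- Lower bound for the constant `L_{ℝ,4k}` in the Bohnenblust–Hille inequality for
polars of 4k-homogeneous polynomials on ℓ∞², obtained from the polynomial
`(x⁴ + y⁴ - 3x²y²)^k` (which has sup norm 1 on `[-1,1]²`). -/
theorem L_R_4k_lower_bound (k : ℕ) (hk : 1 ≤ k)
    (B : ℕ → ℝ)
    (hB : ∀ j, B j =
      ∑ ℓ ∈ Finset.Icc (j - k) (j / 2),
        ((k.factorial : ℝ) * (-3 : ℝ) ^ (j - 2 * ℓ)) /
          ((ℓ.factorial : ℝ) * ((j - 2 * ℓ).factorial : ℝ) * ((k + ℓ - j).factorial : ℝ)))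
    (L : ℝ) (hL0 : 0 ≤ L)
    (hL : ∀ c : ℕ → ℝ,
      (∑ j ∈ Finset.range (4 * k + 1),
          ((4 * k).choose j : ℝ) *
            |c j / ((4 * k).choose j : ℝ)| ^ ((8 * k : ℝ) / (4 * k + 1 : ℝ)))
          ^ ((4 * k + 1 : ℝ) / (8 * k : ℝ)) ≤
        L * sSup ((fun p : ℝ × ℝ =>
            |∑ j ∈ Finset.range (4 * k + 1), c j * p.1 ^ j * p.2 ^ (4 * k - j)|) ''
          (Icc (-1 : ℝ) 1 ×ˢ Icc (-1 : ℝ) 1))) :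
    (∑ j ∈ Finset.range (2 * k + 1),
        ((4 * k).choose (2 * j) : ℝ) *
          |B j / ((4 * k).choose (2 * j) : ℝ)| ^ ((8 * k : ℝ) / (4 * k + 1 : ℝ)))
        ^ ((4 * k + 1 : ℝ) / (8 * k : ℝ)) ≤ L := by
  set c : ℕ → ℝ := fun j => if j % 2 = 0 then B (j / 2) else 0 with hc
  have hceven : ∀ i, c (2 * i) = B i := by
    intro i; simp [hc, Nat.mul_div_cancel_left]
  have hp : (8 * (k : ℝ)) / (4 * (k : ℝ) + 1) ≠ 0 := by
    have : (0:ℝ) < k := by exact_mod_cast hk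
    positivity
  have hmain := hL c
  -- the sum in hL equals our target sum
  have hsum : ∑ j ∈ Finset.range (4 * k + 1),
      ((4 * k).choose j : ℝ) * |c j / ((4 * k).choose j : ℝ)| ^ ((8 * k : ℝ) / (4 * k + 1 : ℝ))
      = ∑ j ∈ Finset.range (2 * k + 1),
        ((4 * k).choose (2 * j) : ℝ) *
          |B j / ((4 * k).choose (2 * j) : ℝ)| ^ ((8 * k : ℝ) / (4 * k + 1 : ℝ)) := by
    have h4k : 4 * k + 1 = 2 * (2 * k) + 1 := by ring
    rw [h4k, sum_range_even]
    · apply Finset.sum_congr rfl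
      intro i _
      rw [hceven]
    · intro j hj
      have hcj : c j = 0 := by simp [hc, hj]
      rw [hcj]
      simp only [zero_div, abs_zero]
      rw [Real.zero_rpow hp]
      ring
  -- the polynomial equals (x^4+y^4-3x^2y^2)^k
  have hpoly : ∀ a b : ℝ, ∑ j ∈ Finset.range (4 * k + 1), c j * a ^ j * b ^ (4 * k - j)
      = (a ^ 4 + b ^ 4 - 3 * a ^ 2 * b ^ 2) ^ k := by
    intro a b
    have h4k : 4 * k + 1 = 2 * (2 * k) + 1 := by ring
    rw [h4k, sum_range_even]
    · rw [← poly_key k B hB a b]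
      apply Finset.sum_congr rfl
      intro i _
      rw [hceven]
    · intro j hj
      simp [hc, hj]
  -- the sup is at most 1
  have hsup : sSup ((fun p : ℝ × ℝ =>
      |∑ j ∈ Finset.range (4 * k + 1), c j * p.1 ^ j * p.2 ^ (4 * k - j)|) ''
      (Icc (-1 : ℝ) 1 ×ˢ Icc (-1 : ℝ) 1)) ≤ 1 := by
    apply Real.sSup_le _ zero_le_one
    rintro z ⟨⟨a, b⟩, ⟨ha, hb⟩, rfl⟩
    simp only [Set.mem_Icc] at ha hb
    dsimp only
    rw [hpoly a b, abs_pow]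
    apply pow_le_one₀ (abs_nonneg _)
    rw [abs_le]
    have ha2 : a ^ 2 ≤ 1 := by nlinarith [ha.1, ha.2]
    have hb2 : b ^ 2 ≤ 1 := by nlinarith [hb.1, hb.2]
    have hab : a ^ 2 * b ^ 2 ≤ 1 := by nlinarith [sq_nonneg a, sq_nonneg b]
    constructor
    · nlinarith [sq_nonneg (a ^ 2 - b ^ 2)]
    · nlinarith [mul_nonneg (sub_nonneg.2 ha2) (sub_nonneg.2 hb2),
        mul_nonneg (sq_nonneg a) (sq_nonneg b), sq_nonneg a, sq_nonneg b]
  rw [hsum] at hmain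
  calc _ ≤ L * sSup _ := hmain
    _ ≤ L * 1 := by exact mul_le_mul_of_nonneg_left hsup hL0
    _ = L := mul_one L
end

section
/- sup{ |x⁴ + y⁴ − 3x²y²| : (x,y) ∈ [−1,1]² } = 1. Consequently, for every integer k ≥ 1, sup{ |(x⁴ + y⁴ − 3x²y²)^k| : (x,y) ∈ [−1,1]² } = 1. -/
open Set

lemma Q4_abs_le (x y : ℝ) (hx : x ∈ Icc (-1 : ℝ) 1) (hy : y ∈ Icc (-1 : ℝ) 1) :
    |x ^ 4 + y ^ 4 - 3 * x ^ 2 * y ^ 2| ≤ 1 := by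
  obtain ⟨hx1, hx2⟩ := hx
  obtain ⟨hy1, hy2⟩ := hy
  have hx' : x ^ 2 ≤ 1 := by
    nlinarith [mul_nonneg (by linarith : (0:ℝ) ≤ 1 - x) (by linarith : (0:ℝ) ≤ 1 + x)]
  have hy' : y ^ 2 ≤ 1 := by
    nlinarith [mul_nonneg (by linarith : (0:ℝ) ≤ 1 - y) (by linarith : (0:ℝ) ≤ 1 + y)]
  have ha : (0:ℝ) ≤ x ^ 2 := sq_nonneg x
  have hb : (0:ℝ) ≤ y ^ 2 := sq_nonneg y
  rw [abs_le]
  constructor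
  · -- lower: f + 1 = (x²-y²)² - x²y² + 1 ≥ 0 since x²y² ≤ 1
    nlinarith [sq_nonneg (x ^ 2 - y ^ 2),
      mul_nonneg (by linarith : (0:ℝ) ≤ 1 - x ^ 2) hb,
      mul_nonneg (by linarith : (0:ℝ) ≤ 1 - y ^ 2) ha]
  · -- upper: 1 - f = (1-(x²-y²)²) + x²y² ≥ 0
    nlinarith [mul_nonneg ha hb,
      mul_nonneg (by linarith : (0:ℝ) ≤ 1 - x ^ 2 + y ^ 2)
        (by linarith : (0:ℝ) ≤ 1 + x ^ 2 - y ^ 2)]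

/-- The polynomial `x⁴ + y⁴ - 3x²y²` has sup norm 1 on `[-1,1]²`, and consequently
so do all of its powers. -/
theorem sup_norm_Q4_and_powers :
    sSup ((fun p : ℝ × ℝ => |p.1 ^ 4 + p.2 ^ 4 - 3 * p.1 ^ 2 * p.2 ^ 2|) ''
      (Icc (-1 : ℝ) 1 ×ˢ Icc (-1 : ℝ) 1)) = 1 ∧
    ∀ k : ℕ, 1 ≤ k →
      sSup ((fun p : ℝ × ℝ => |(p.1 ^ 4 + p.2 ^ 4 - 3 * p.1 ^ 2 * p.2 ^ 2) ^ k|) ''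
        (Icc (-1 : ℝ) 1 ×ˢ Icc (-1 : ℝ) 1)) = 1 := by
  have hmem : ((1:ℝ), (0:ℝ)) ∈ Icc (-1 : ℝ) 1 ×ˢ Icc (-1 : ℝ) 1 := by
    constructor <;> constructor <;> norm_num
  constructor
  · apply IsGreatest.csSup_eq
    constructor
    · exact ⟨(1, 0), hmem, by norm_num⟩
    · rintro v ⟨⟨x, y⟩, ⟨hx, hy⟩, rfl⟩
      exact Q4_abs_le x y hx hy
  · intro k hk
    apply IsGreatest.csSup_eq
    constructor
    · exact ⟨(1, 0), hmem, by norm_num⟩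
    · rintro v ⟨⟨x, y⟩, ⟨hx, hy⟩, rfl⟩
      simp only [abs_pow]
      exact pow_le_one₀ (abs_nonneg _) (Q4_abs_le x y hx hy)
end

section
/- Every constant D ≥ 0 such that for all real numbers a, b, c one has (|a|^{4/3} + |b|^{4/3} + |c|^{4/3})^{3/4} ≤ D · sup{|a x² + b y² + c xy| : (x,y) ∈ [−1,1]²} satisfies D ≥ (4/5)·3^{3/4} (≈ 1.823). In particular, for P(x,y) = x² − y² + xy one has sup{|P(x,y)| : (x,y) ∈ [−1,1]²} = 5/4, while (1 + 1 + 1)^{3/4} = 3^{3/4}. -/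
open Set

lemma sup_key : sSup ((fun p : ℝ × ℝ => |p.1 ^ 2 - p.2 ^ 2 + p.1 * p.2|) ''
      (Icc (-1 : ℝ) 1 ×ˢ Icc (-1 : ℝ) 1)) = 5 / 4 := by
  apply IsGreatest.csSup_eq
  constructor
  · refine ⟨((1 : ℝ), (1/2 : ℝ)), ?_, ?_⟩
    · constructor <;> constructor <;> norm_num
    · norm_num [abs_of_nonneg]
  · rintro v ⟨⟨x, y⟩, ⟨⟨hx1, hx2⟩, ⟨hy1, hy2⟩⟩, rfl⟩
    simp only at *
    rw [abs_le]
    constructor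
    · nlinarith [sq_nonneg (x + y/2), sq_nonneg (x - y/2), sq_nonneg (2*y - 1), sq_nonneg (2*y + 1)]
    · nlinarith [sq_nonneg (x + y/2), sq_nonneg (x - y/2), sq_nonneg (2*y - 1), sq_nonneg (2*y + 1)]

/-- Any constant in the polynomial Bohnenblust–Hille inequality for real
2-homogeneous polynomials on ℓ∞² is at least `(4/5)·3^{3/4} ≈ 1.823`; in particular
the polynomial `x² - y² + xy` has sup norm `5/4` on `[-1,1]²` while its coefficient
vector has ℓ_{4/3}-norm `3^{3/4}`. -/
theorem D_R2_lower_bound :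
    (∀ D : ℝ, 0 ≤ D →
      (∀ a b c : ℝ,
        (|a| ^ (4 / 3 : ℝ) + |b| ^ (4 / 3 : ℝ) + |c| ^ (4 / 3 : ℝ)) ^ (3 / 4 : ℝ) ≤
          D * sSup ((fun p : ℝ × ℝ => |a * p.1 ^ 2 + b * p.2 ^ 2 + c * p.1 * p.2|) ''
            (Icc (-1 : ℝ) 1 ×ˢ Icc (-1 : ℝ) 1))) →
      (4 / 5 : ℝ) * (3 : ℝ) ^ (3 / 4 : ℝ) ≤ D) ∧
    sSup ((fun p : ℝ × ℝ => |p.1 ^ 2 - p.2 ^ 2 + p.1 * p.2|) ''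
      (Icc (-1 : ℝ) 1 ×ˢ Icc (-1 : ℝ) 1)) = 5 / 4 ∧
    ((1 : ℝ) + 1 + 1) ^ (3 / 4 : ℝ) = (3 : ℝ) ^ (3 / 4 : ℝ) := by
  refine ⟨?_, sup_key, by norm_num⟩
  intro D hD h
  have h1 := h 1 (-1) 1
  have hfun : (fun p : ℝ × ℝ => |1 * p.1 ^ 2 + (-1) * p.2 ^ 2 + 1 * p.1 * p.2|)
      = (fun p : ℝ × ℝ => |p.1 ^ 2 - p.2 ^ 2 + p.1 * p.2|) := by
    funext p; ring_nf
  rw [hfun, sup_key] at h1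
  simp only [abs_one, abs_neg, Real.one_rpow] at h1
  linarith
end

section
/- Every constant D ≥ 0 such that for every 3-homogeneous polynomial P(x₁,…,x₆) = Σ_{|α|=3} a_α x^α with real coefficients on ℝ⁶ one has (Σ_{|α|=3} |a_α|^{3/2})^{2/3} ≤ D · sup{|P(x)| : x ∈ [−1,1]⁶} satisfies D ≥ 12^{2/3}/(5/2) (≈ 2.096). -/
open Finset Set

@[simp] lemma vec6_val5 {β : Type*} (a b c d e f : β) : ![a,b,c,d,e,f] 5 = f := rfl

noncomputable def bhCoef : (Fin 6 → Fin 4) → ℝ := fun α =>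
  if α = ![1,0,2,0,0,0] then 1 else
  if α = ![1,0,1,1,0,0] then 1 else
  if α = ![1,0,0,2,0,0] then -1 else
  if α = ![0,1,2,0,0,0] then 1 else
  if α = ![0,1,1,1,0,0] then 1 else
  if α = ![0,1,0,2,0,0] then -1 else
  if α = ![1,0,0,0,2,0] then 1 else
  if α = ![1,0,0,0,1,1] then 1 else
  if α = ![1,0,0,0,0,2] then -1 else
  if α = ![0,1,0,0,2,0] then -1 else
  if α = ![0,1,0,0,1,1] then -1 else
  if α = ![0,1,0,0,0,2] then 1 else 0

def bhS : Finset (Fin 6 → Fin 4) :=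
  {![1,0,2,0,0,0], ![1,0,1,1,0,0], ![1,0,0,2,0,0], ![0,1,2,0,0,0], ![0,1,1,1,0,0],
   ![0,1,0,2,0,0], ![1,0,0,0,2,0], ![1,0,0,0,1,1], ![1,0,0,0,0,2], ![0,1,0,0,2,0],
   ![0,1,0,0,1,1], ![0,1,0,0,0,2]}

lemma bhCoef_zero {x : Fin 6 → Fin 4} (h : x ∉ bhS) : bhCoef x = 0 := by
  simp only [bhS, Finset.mem_insert, Finset.mem_singleton, not_or] at h
  obtain ⟨h1,h2,h3,h4,h5,h6,h7,h8,h9,h10,h11,h12⟩ := h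
  simp [bhCoef, h1,h2,h3,h4,h5,h6,h7,h8,h9,h10,h11,h12]

lemma bhS_sum (g : (Fin 6 → Fin 4) → ℝ) :
    ∑ α ∈ bhS, g α =
      g ![1,0,2,0,0,0] + g ![1,0,1,1,0,0] + g ![1,0,0,2,0,0] + g ![0,1,2,0,0,0] +
      g ![0,1,1,1,0,0] + g ![0,1,0,2,0,0] + g ![1,0,0,0,2,0] + g ![1,0,0,0,1,1] +
      g ![1,0,0,0,0,2] + g ![0,1,0,0,2,0] + g ![0,1,0,0,1,1] + g ![0,1,0,0,0,2] := by
  rw [bhS, Finset.sum_insert (by decide), Finset.sum_insert (by decide),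
    Finset.sum_insert (by decide), Finset.sum_insert (by decide),
    Finset.sum_insert (by decide), Finset.sum_insert (by decide),
    Finset.sum_insert (by decide), Finset.sum_insert (by decide),
    Finset.sum_insert (by decide), Finset.sum_insert (by decide),
    Finset.sum_insert (by decide), Finset.sum_singleton]
  ring

/-- Any constant in the polynomial Bohnenblust–Hille inequality for real
3-homogeneous polynomials on ℓ∞⁶ is at least `12^{2/3}/(5/2) ≈ 2.096`.
Multi-indices `α` with `|α| = 3` on 6 variables are encoded as functions
`Fin 6 → Fin 4` with `∑ i, α i = 3`. -/
theorem D_R3_lower_bound (D : ℝ) (hD0 : 0 ≤ D)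
    (hD : ∀ a : (Fin 6 → Fin 4) → ℝ,
      (∑ α : Fin 6 → Fin 4,
          if (∑ i, (α i : ℕ)) = 3 then |a α| ^ (3 / 2 : ℝ) else 0) ^ (2 / 3 : ℝ) ≤
        D * sSup ((fun x : Fin 6 → ℝ =>
            |∑ α : Fin 6 → Fin 4,
              if (∑ i, (α i : ℕ)) = 3 then a α * ∏ i, x i ^ (α i : ℕ) else 0|) ''
          {x : Fin 6 → ℝ | ∀ i, x i ∈ Icc (-1 : ℝ) 1})) :
    (12 : ℝ) ^ (2 / 3 : ℝ) / (5 / 2) ≤ D := by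
  have key := hD bhCoef
  -- evaluate the coefficient sum
  have h1 : (∑ α : Fin 6 → Fin 4,
      if (∑ i, (α i : ℕ)) = 3 then |bhCoef α| ^ (3 / 2 : ℝ) else 0) = 12 := by
    rw [← Finset.sum_subset (Finset.subset_univ bhS)
      (fun x _ hx => by rw [bhCoef_zero hx]; simp [Real.zero_rpow])]
    rw [bhS_sum]
    simp (config := { decide := true }) [bhCoef, Real.one_rpow]
    norm_num
  -- evaluate the polynomial
  have hPx : ∀ x : Fin 6 → ℝ,
      (∑ α : Fin 6 → Fin 4,
        if (∑ i, (α i : ℕ)) = 3 then bhCoef α * ∏ i, x i ^ (α i : ℕ) else 0) =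
      (x 0 + x 1) * (x 2 ^ 2 + x 2 * x 3 - x 3 ^ 2) +
      (x 0 - x 1) * (x 4 ^ 2 + x 4 * x 5 - x 5 ^ 2) := by
    intro x
    rw [← Finset.sum_subset (Finset.subset_univ bhS)
      (fun y _ hy => by rw [bhCoef_zero hy]; simp)]
    rw [bhS_sum]
    simp (config := { decide := true }) [bhCoef, Fin.prod_univ_six]
    ring
  -- bound the sup norm
  have h2 : ∀ x : Fin 6 → ℝ, (∀ i, x i ∈ Icc (-1 : ℝ) 1) →
      |∑ α : Fin 6 → Fin 4,
        if (∑ i, (α i : ℕ)) = 3 then bhCoef α * ∏ i, x i ^ (α i : ℕ) else 0| ≤ 5 / 2 := by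
    intro x hx
    rw [hPx x]
    obtain ⟨h0l, h0r⟩ := hx 0
    obtain ⟨h1l, h1r⟩ := hx 1
    obtain ⟨h2l, h2r⟩ := hx 2
    obtain ⟨h3l, h3r⟩ := hx 3
    obtain ⟨h4l, h4r⟩ := hx 4
    obtain ⟨h5l, h5r⟩ := hx 5
    have hA : |x 2 ^ 2 + x 2 * x 3 - x 3 ^ 2| ≤ 5 / 4 := by
      rw [abs_le]
      constructor
      · nlinarith [sq_nonneg (2 * x 2 + x 3),
          mul_nonneg (by linarith : (0:ℝ) ≤ 1 - x 3) (by linarith : (0:ℝ) ≤ 1 + x 3)]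
      · nlinarith [sq_nonneg (2 * x 3 - x 2),
          mul_nonneg (by linarith : (0:ℝ) ≤ 1 - x 2) (by linarith : (0:ℝ) ≤ 1 + x 2)]
    have hB : |x 4 ^ 2 + x 4 * x 5 - x 5 ^ 2| ≤ 5 / 4 := by
      rw [abs_le]
      constructor
      · nlinarith [sq_nonneg (2 * x 4 + x 5),
          mul_nonneg (by linarith : (0:ℝ) ≤ 1 - x 5) (by linarith : (0:ℝ) ≤ 1 + x 5)]
      · nlinarith [sq_nonneg (2 * x 5 - x 4),
          mul_nonneg (by linarith : (0:ℝ) ≤ 1 - x 4) (by linarith : (0:ℝ) ≤ 1 + x 4)]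
    have habs : |x 0 + x 1| + |x 0 - x 1| ≤ 2 := by
      rcases abs_cases (x 0 + x 1) with ⟨e1, _⟩ | ⟨e1, _⟩ <;>
        rcases abs_cases (x 0 - x 1) with ⟨e2, _⟩ | ⟨e2, _⟩ <;> linarith
    calc |(x 0 + x 1) * (x 2 ^ 2 + x 2 * x 3 - x 3 ^ 2) +
          (x 0 - x 1) * (x 4 ^ 2 + x 4 * x 5 - x 5 ^ 2)|
        ≤ |(x 0 + x 1) * (x 2 ^ 2 + x 2 * x 3 - x 3 ^ 2)| +
          |(x 0 - x 1) * (x 4 ^ 2 + x 4 * x 5 - x 5 ^ 2)| := abs_add_le _ _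
      _ = |x 0 + x 1| * |x 2 ^ 2 + x 2 * x 3 - x 3 ^ 2| +
          |x 0 - x 1| * |x 4 ^ 2 + x 4 * x 5 - x 5 ^ 2| := by rw [abs_mul, abs_mul]
      _ ≤ |x 0 + x 1| * (5 / 4) + |x 0 - x 1| * (5 / 4) :=
          add_le_add (mul_le_mul_of_nonneg_left hA (abs_nonneg _))
            (mul_le_mul_of_nonneg_left hB (abs_nonneg _))
      _ ≤ 5 / 2 := by linarith [abs_nonneg (x 0 + x 1), abs_nonneg (x 0 - x 1)]
  have h3 : sSup ((fun x : Fin 6 → ℝ =>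
      |∑ α : Fin 6 → Fin 4,
        if (∑ i, (α i : ℕ)) = 3 then bhCoef α * ∏ i, x i ^ (α i : ℕ) else 0|) ''
      {x : Fin 6 → ℝ | ∀ i, x i ∈ Icc (-1 : ℝ) 1}) ≤ 5 / 2 := by
    apply Real.sSup_le
    · rintro y ⟨x, hx, rfl⟩
      exact h2 x hx
    · norm_num
  rw [h1] at key
  have h4 : (12 : ℝ) ^ (2 / 3 : ℝ) ≤ D * (5 / 2) :=
    key.trans (mul_le_mul_of_nonneg_left h3 hD0)
  rw [div_le_iff₀ (by norm_num : (0:ℝ) < 5 / 2)]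
  linarith
end

section
/- Let P₃ : ℝ⁶ → ℝ be the 3-homogeneous polynomial P₃(x) = (x₁+x₂)(x₃² + x₃x₄ − x₄²) + (x₁−x₂)(x₅² + x₅x₆ − x₆²). Then sup{ |P₃(x)| : x ∈ [−1,1]⁶ } = 5/2. -/
open Set

/-- The 3-homogeneous polynomial
`P₃(x) = (x₁+x₂)(x₃² + x₃x₄ - x₄²) + (x₁-x₂)(x₅² + x₅x₆ - x₆²)`
has sup norm `5/2` on `[-1,1]⁶`. -/
theorem sup_norm_P3 :
    sSup ((fun x : Fin 6 → ℝ =>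
        |(x 0 + x 1) * ((x 2) ^ 2 + x 2 * x 3 - (x 3) ^ 2) +
          (x 0 - x 1) * ((x 4) ^ 2 + x 4 * x 5 - (x 5) ^ 2)|) ''
      {x : Fin 6 → ℝ | ∀ i, x i ∈ Icc (-1 : ℝ) 1}) = 5 / 2 := by
  have key : ∀ u v : ℝ, u ∈ Icc (-1:ℝ) 1 → v ∈ Icc (-1:ℝ) 1 →
      |u^2 + u*v - v^2| ≤ 5/4 := by
    rintro u v ⟨hu1, hu2⟩ ⟨hv1, hv2⟩
    rw [abs_le]
    constructor <;>
      nlinarith [sq_nonneg (u + v/2), sq_nonneg (v - u/2), sq_nonneg u, sq_nonneg v]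
  have hbound : ∀ y ∈ ((fun x : Fin 6 → ℝ =>
        |(x 0 + x 1) * ((x 2) ^ 2 + x 2 * x 3 - (x 3) ^ 2) +
          (x 0 - x 1) * ((x 4) ^ 2 + x 4 * x 5 - (x 5) ^ 2)|) ''
      {x : Fin 6 → ℝ | ∀ i, x i ∈ Icc (-1 : ℝ) 1}), y ≤ 5/2 := by
    rintro y ⟨x, hx, rfl⟩
    have hA := key (x 2) (x 3) (hx 2) (hx 3)
    have hB := key (x 4) (x 5) (hx 4) (hx 5)
    have h0 := hx 0
    have h1 := hx 1
    simp only [mem_Icc] at h0 h1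
    have h01 : |x 0 + x 1| + |x 0 - x 1| ≤ 2 := by
      rcases abs_cases (x 0 + x 1) with ⟨e, _⟩ | ⟨e, _⟩ <;>
        rcases abs_cases (x 0 - x 1) with ⟨f, _⟩ | ⟨f, _⟩ <;> linarith
    calc |(x 0 + x 1) * ((x 2) ^ 2 + x 2 * x 3 - (x 3) ^ 2) +
          (x 0 - x 1) * ((x 4) ^ 2 + x 4 * x 5 - (x 5) ^ 2)|
        ≤ |(x 0 + x 1) * ((x 2) ^ 2 + x 2 * x 3 - (x 3) ^ 2)| +
          |(x 0 - x 1) * ((x 4) ^ 2 + x 4 * x 5 - (x 5) ^ 2)| := abs_add_le _ _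
      _ = |x 0 + x 1| * |(x 2) ^ 2 + x 2 * x 3 - (x 3) ^ 2| +
          |x 0 - x 1| * |(x 4) ^ 2 + x 4 * x 5 - (x 5) ^ 2| := by rw [abs_mul, abs_mul]
      _ ≤ |x 0 + x 1| * (5/4) + |x 0 - x 1| * (5/4) :=
          add_le_add (mul_le_mul_of_nonneg_left hA (abs_nonneg _))
            (mul_le_mul_of_nonneg_left hB (abs_nonneg _))
      _ ≤ 5/2 := by linarith
  apply le_antisymm
  · exact Real.sSup_le hbound (by norm_num)
  · have hmem : (5/2 : ℝ) ∈ ((fun x : Fin 6 → ℝ =>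
        |(x 0 + x 1) * ((x 2) ^ 2 + x 2 * x 3 - (x 3) ^ 2) +
          (x 0 - x 1) * ((x 4) ^ 2 + x 4 * x 5 - (x 5) ^ 2)|) ''
      {x : Fin 6 → ℝ | ∀ i, x i ∈ Icc (-1 : ℝ) 1}) := by
      refine ⟨![1, 0, 1, 1/2, 1, 1/2], ?_, ?_⟩
      · intro i
        fin_cases i <;> norm_num [mem_Icc]
      · have h5 : (![1, 0, 1, 1/2, 1, 1/2] : Fin 6 → ℝ) 5 = 1/2 := rfl
        have h2 : (![1, 0, 1, 1/2, 1, 1/2] : Fin 6 → ℝ) 2 = 1 := rfl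
        have h3 : (![1, 0, 1, 1/2, 1, 1/2] : Fin 6 → ℝ) 3 = 1/2 := rfl
        have h4 : (![1, 0, 1, 1/2, 1, 1/2] : Fin 6 → ℝ) 4 = 1 := rfl
        norm_num [h5, h2, h3, h4, Matrix.cons_val_zero, Matrix.cons_val_one,
          Matrix.head_cons, abs_of_nonneg]
    exact le_csSup ⟨5/2, hbound⟩ hmem
end

section
/- Let k ≥ 1 be an integer and define B_j = Σ_{ℓ = max(0, j−k)}^{⌊j/2⌋} (k!·(−3)^{j−2ℓ})/(ℓ!·(j−2ℓ)!·(k−j+ℓ)!) for j = 0, …, 2k (so B_j is the coefficient of x^{2j} y^{4k−2j} in (x⁴ + y⁴ − 3x²y²)^k). Then every constant D ≥ 0 such that for every 4k-homogeneous polynomial P(x,y) = Σ_{|α|=4k} a_α x^{α₁} y^{α₂} with real coefficients one has (Σ_{|α|=4k} |a_α|^{8k/(4k+1)})^{(4k+1)/(8k)} ≤ D · sup{|P(x,y)| : (x,y) ∈ [−1,1]²} satisfies D ≥ (Σ_{j=0}^{2k} |B_j|^{8k/(4k+1)})^{(4k+1)/(8k)}. -/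
open Finset Set

lemma sum_even_aux (n : ℕ) (f : ℕ → ℝ) (h : ∀ i, ¬ 2 ∣ i → f i = 0) :
    ∑ i ∈ Finset.range (2 * n + 1), f i = ∑ j ∈ Finset.range (n + 1), f (2 * j) := by
  rw [← Finset.sum_filter_add_sum_filter_not (Finset.range (2 * n + 1)) (2 ∣ ·)]
  have h2 : ∑ i ∈ (Finset.range (2 * n + 1)).filter (fun i => ¬ 2 ∣ i), f i = 0 :=
    Finset.sum_eq_zero fun i hi => h i (Finset.mem_filter.mp hi).2
  rw [h2, add_zero]
  refine Finset.sum_nbij' (fun i => i / 2) (fun j => 2 * j) ?_ ?_ ?_ ?_ ?_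
  · intro a ha
    simp only [Finset.mem_filter, Finset.mem_range] at ha ⊢
    omega
  · intro a ha
    simp only [Finset.mem_filter, Finset.mem_range] at ha ⊢
    refine ⟨by omega, ⟨a, rfl⟩⟩
  · intro a ha
    simp only [Finset.mem_filter, Finset.mem_range] at ha
    omega
  · intro a _; omega
  · intro a ha
    simp only [Finset.mem_filter, Finset.mem_range] at ha
    obtain ⟨_, c, rfl⟩ := ha
    congr 1
    omega

lemma key1_s17 (k : ℕ) (B : ℕ → ℝ)
    (hB : ∀ j, B j =
      ∑ ℓ ∈ Finset.Icc (j - k) (j / 2),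
        ((k.factorial : ℝ) * (-3 : ℝ) ^ (j - 2 * ℓ)) /
          ((ℓ.factorial : ℝ) * ((j - 2 * ℓ).factorial : ℝ) * ((k + ℓ - j).factorial : ℝ)))
    (u : ℝ) :
    ∑ j ∈ Finset.range (2 * k + 1), B j * u ^ j = (u ^ 2 - 3 * u + 1) ^ k := by
  have h1 : (u ^ 2 - 3 * u + 1) ^ k = ((-3 * u) + (1 + u ^ 2)) ^ k := by ring_nf
  rw [h1, add_pow]
  have h2 : ∀ m, (1 + u ^ 2) ^ m = ∑ ℓ ∈ Finset.range (m + 1),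
      (u ^ 2) ^ ℓ * (1:ℝ) ^ (m - ℓ) * (m.choose ℓ) := by
    intro m; rw [← add_pow]; ring_nf
  simp only [h2]
  simp only [hB, Finset.sum_mul]
  rw [Finset.sum_sigma']
  simp only [Finset.mul_sum, Finset.sum_mul]
  rw [Finset.sum_sigma']
  refine Finset.sum_nbij' (fun p => ⟨p.1 - 2 * p.2, p.2⟩) (fun p => ⟨p.1 + 2 * p.2, p.2⟩)
    ?_ ?_ ?_ ?_ ?_
  · rintro ⟨j, ℓ⟩ h
    simp only [Finset.mem_sigma, Finset.mem_range, Finset.mem_Icc] at h ⊢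
    omega
  · rintro ⟨m, ℓ⟩ h
    simp only [Finset.mem_sigma, Finset.mem_range, Finset.mem_Icc] at h ⊢
    omega
  · rintro ⟨j, ℓ⟩ h
    simp only [Finset.mem_sigma, Finset.mem_range, Finset.mem_Icc] at h
    simp only [Sigma.mk.inj_iff, heq_eq_eq]
    exact ⟨by omega, trivial⟩
  · rintro ⟨m, ℓ⟩ h
    simp only [Finset.mem_sigma, Finset.mem_range, Finset.mem_Icc] at h
    simp only [Sigma.mk.inj_iff, heq_eq_eq]
    exact ⟨by omega, trivial⟩
  · rintro ⟨j, ℓ⟩ h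
    simp only [Finset.mem_sigma, Finset.mem_range, Finset.mem_Icc] at h
    obtain ⟨hj, hℓ1, hℓ2⟩ := h
    obtain ⟨m, rfl⟩ : ∃ m, j = m + 2 * ℓ := ⟨j - 2 * ℓ, by omega⟩
    have hm' : m ≤ k := by omega
    have hℓ' : ℓ ≤ k - m := by omega
    have e1 : m + 2 * ℓ - 2 * ℓ = m := by omega
    have e2 : k + ℓ - (m + 2 * ℓ) = k - m - ℓ := by omega
    have e3 : k - m - ℓ = k - (m + 2 * ℓ - 2 * ℓ) - ℓ := by omega
    dsimp only
    simp only [e1, e2, one_pow]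
    have c1 : ((k.choose m : ℝ)) = k.factorial / (m.factorial * (k - m).factorial) :=
      Nat.cast_choose ℝ hm'
    have c2 : (((k - m).choose ℓ : ℝ)) =
        (k - m).factorial / (ℓ.factorial * (k - m - ℓ).factorial) :=
      Nat.cast_choose ℝ hℓ'
    have hne : ∀ n : ℕ, ((n.factorial : ℝ)) ≠ 0 := fun n => by
      exact_mod_cast n.factorial_ne_zero
    rw [mul_pow, pow_add, pow_mul, c1, c2]
    field_simp [c1, c2]

lemma key2_s17 (k : ℕ) (B : ℕ → ℝ)
    (hB : ∀ j, B j =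
      ∑ ℓ ∈ Finset.Icc (j - k) (j / 2),
        ((k.factorial : ℝ) * (-3 : ℝ) ^ (j - 2 * ℓ)) /
          ((ℓ.factorial : ℝ) * ((j - 2 * ℓ).factorial : ℝ) * ((k + ℓ - j).factorial : ℝ)))
    (u v : ℝ) :
    ∑ j ∈ Finset.range (2 * k + 1), B j * u ^ j * v ^ (2 * k - j) =
      (u ^ 2 - 3 * (u * v) + v ^ 2) ^ k := by
  have hB2k : B (2 * k) = 1 := by
    rw [hB]
    have : Finset.Icc (2 * k - k) (2 * k / 2) = {k} := by
      have h1 : 2 * k - k = k := by omega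
      have h2 : 2 * k / 2 = k := by omega
      rw [h1, h2, Finset.Icc_self]
    rw [this, Finset.sum_singleton]
    have e : 2 * k - 2 * k = 0 := by omega
    have e2 : k + k - 2 * k = 0 := by omega
    rw [e, e2]
    simp only [pow_zero, Nat.factorial_zero, Nat.cast_one, mul_one]
    exact div_self (by exact_mod_cast k.factorial_ne_zero)
  rcases eq_or_ne v 0 with rfl | hv
  · rw [Finset.sum_eq_single_of_mem (2 * k) (by simp)]
    · have e : 2 * k - 2 * k = 0 := by omega
      rw [hB2k, e, pow_zero, one_mul, mul_one]
      rw [show (u ^ 2 - 3 * (u * 0) + 0 ^ 2) = u ^ 2 by ring, ← pow_mul]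
    · intro j hj hne
      have : 2 * k - j ≠ 0 := by
        simp only [Finset.mem_range] at hj; omega
      rw [zero_pow this, mul_zero]
  · have h1 := key1_s17 k B hB (u / v)
    have hval : ∀ j ∈ Finset.range (2 * k + 1),
        B j * u ^ j * v ^ (2 * k - j) = v ^ (2 * k) * (B j * (u / v) ^ j) := by
      intro j hj
      simp only [Finset.mem_range] at hj
      have : (2 * k) = j + (2 * k - j) := by omega
      rw [div_pow, this, pow_add, Nat.add_sub_cancel_left]
      field_simp
    rw [Finset.sum_congr rfl hval, ← Finset.mul_sum, h1]
    rw [show v ^ (2 * k) = (v ^ 2) ^ k by rw [← pow_mul], ← mul_pow]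
    congr 1
    field_simp

/-- Lower bound for the constant `D_{ℝ,4k}` in the polynomial Bohnenblust–Hille
inequality for 4k-homogeneous polynomials on ℓ∞², obtained from the polynomial
`Q_{4k}(x,y) = (x⁴ + y⁴ - 3x²y²)^k`, which has sup norm 1 on `[-1,1]²`. -/
theorem D_R_4k_lower_bound (k : ℕ) (hk : 1 ≤ k)
    (B : ℕ → ℝ)
    (hB : ∀ j, B j =
      ∑ ℓ ∈ Finset.Icc (j - k) (j / 2),
        ((k.factorial : ℝ) * (-3 : ℝ) ^ (j - 2 * ℓ)) /
          ((ℓ.factorial : ℝ) * ((j - 2 * ℓ).factorial : ℝ) * ((k + ℓ - j).factorial : ℝ)))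
    (D : ℝ) (hD0 : 0 ≤ D)
    (hD : ∀ c : ℕ → ℝ,
      (∑ j ∈ Finset.range (4 * k + 1),
          |c j| ^ ((8 * k : ℝ) / (4 * k + 1 : ℝ))) ^ ((4 * k + 1 : ℝ) / (8 * k : ℝ)) ≤
        D * sSup ((fun p : ℝ × ℝ =>
            |∑ j ∈ Finset.range (4 * k + 1), c j * p.1 ^ j * p.2 ^ (4 * k - j)|) ''
          (Icc (-1 : ℝ) 1 ×ˢ Icc (-1 : ℝ) 1))) :
    (∑ j ∈ Finset.range (2 * k + 1),
        |B j| ^ ((8 * k : ℝ) / (4 * k + 1 : ℝ))) ^ ((4 * k + 1 : ℝ) / (8 * k : ℝ)) ≤ D := by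
  set p : ℝ := (8 * k : ℝ) / (4 * k + 1 : ℝ) with hp
  set q : ℝ := (4 * k + 1 : ℝ) / (8 * k : ℝ) with hq
  have hp0 : p ≠ 0 := by
    rw [hp]
    have h8k : (0:ℝ) < 8 * k := by positivity
    positivity
  set c : ℕ → ℝ := fun i => if 2 ∣ i then B (i / 2) else 0 with hc
  have hcodd : ∀ i, ¬ 2 ∣ i → c i = 0 := fun i hi => by simp [hc, hi]
  have hceven : ∀ j, c (2 * j) = B j := fun j => by
    simp [hc, Nat.mul_div_cancel_left j (by norm_num : 0 < 2)]
  have h41 : 4 * k + 1 = 2 * (2 * k) + 1 := by ring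
  -- equality of coefficient sums
  have hsum : ∑ i ∈ Finset.range (4 * k + 1), |c i| ^ p
      = ∑ j ∈ Finset.range (2 * k + 1), |B j| ^ p := by
    rw [h41, sum_even_aux (2 * k) (fun i => |c i| ^ p)
      (fun i hi => by rw [hcodd i hi, abs_zero, Real.zero_rpow hp0])]
    refine Finset.sum_congr rfl fun j _ => by rw [hceven]
  -- sup bound
  have hsup : sSup ((fun p : ℝ × ℝ =>
      |∑ j ∈ Finset.range (4 * k + 1), c j * p.1 ^ j * p.2 ^ (4 * k - j)|) ''
      (Icc (-1 : ℝ) 1 ×ˢ Icc (-1 : ℝ) 1)) ≤ 1 := by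
    refine Real.sSup_le ?_ zero_le_one
    rintro z ⟨⟨x, y⟩, ⟨hx, hy⟩, rfl⟩
    simp only [Set.mem_Icc] at hx hy
    have hval : ∑ i ∈ Finset.range (4 * k + 1), c i * x ^ i * y ^ (4 * k - i)
        = (x ^ 4 - 3 * (x ^ 2 * y ^ 2) + y ^ 4) ^ k := by
      rw [h41, sum_even_aux (2 * k) (fun i => c i * x ^ i * y ^ (4 * k - i))
        (fun i hi => by rw [hcodd i hi, zero_mul, zero_mul])]
      have := key2_s17 k B hB (x ^ 2) (y ^ 2)
      rw [show ((x ^ 2) ^ 2 - 3 * (x ^ 2 * y ^ 2) + (y ^ 2) ^ 2)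
          = (x ^ 4 - 3 * (x ^ 2 * y ^ 2) + y ^ 4) by ring] at this
      rw [← this]
      refine Finset.sum_congr rfl fun j hj => ?_
      simp only [Finset.mem_range] at hj
      rw [hceven, ← pow_mul, ← pow_mul]
      congr 2
      omega
    dsimp only
    rw [hval, abs_pow]
    refine pow_le_one₀ (abs_nonneg _) ?_
    rw [abs_le]
    obtain ⟨hx1, hx2⟩ := hx
    obtain ⟨hy1, hy2⟩ := hy
    have hx2' : x ^ 2 ≤ 1 := by nlinarith
    have hy2' : y ^ 2 ≤ 1 := by nlinarith
    have h3 : x ^ 2 * y ^ 2 ≤ 1 := by nlinarith [sq_nonneg x, sq_nonneg y]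
    have h7 : 0 ≤ x ^ 2 * y ^ 2 := by positivity
    constructor
    · nlinarith [sq_nonneg (x ^ 2 - y ^ 2)]
    · nlinarith [sq_nonneg x, sq_nonneg y,
        mul_nonneg (sub_nonneg.2 hx2') (sub_nonneg.2 hy2')]
  calc (∑ j ∈ Finset.range (2 * k + 1), |B j| ^ p) ^ q
      = (∑ i ∈ Finset.range (4 * k + 1), |c i| ^ p) ^ q := by rw [hsum]
    _ ≤ D * sSup ((fun p : ℝ × ℝ =>
          |∑ j ∈ Finset.range (4 * k + 1), c j * p.1 ^ j * p.2 ^ (4 * k - j)|) ''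
          (Icc (-1 : ℝ) 1 ×ˢ Icc (-1 : ℝ) 1)) := hD c
    _ ≤ D * 1 := mul_le_mul_of_nonneg_left hsup hD0
    _ = D := mul_one D
end
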